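/- arXiv:1503.03025 — 11 statements merged into one kernel-verified Lean document; each statement's English description precedes it below -/
import Mathlib

section
/- Let ε > 0 and let (C(t), R(t), P_C(t), P_R(t)) be a solution of the customer-dynamics model on [t₀, ∞) with nonnegative initial conditions C(t₀) ≥ 0, R(t₀) ≥ 0, P_C(t₀) ≥ 0, P_R(t₀) ≥ 0. Then C(t) ≥ 0, R(t) ≥ 0, P_C(t) ≥ 0 and P_R(t) ≥ 0 for all t ≥ t₀. -/
open Real Filter Topology

/-- The customer-dynamics model: `(C, R, PC, PR)` solves the system on `[t0, ∞)`. -/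
def IsSolution (l1 l2 l3 l4 l5 l6 l7 b1 b2 eps gam m mR al t0 : ℝ)
    (C R PC PR : ℝ → ℝ) : Prop :=
  ∀ t : ℝ, t0 ≤ t →
    HasDerivAt C (l7 * R t - (eps + b1 + l5) * C t + (l1 + m * l4) * PC t
      + l2 * R t * PC t) t ∧
    HasDerivAt R (l5 * C t - (eps + b2 + l7) * R t + (l3 + m * l4) * PR t
      + (l2 + mR * l6) * R t * PR t) t ∧
    HasDerivAt PC ((1 - al) * gam + b1 * C t + l7 * PR t - (eps + l5 + l1 + m * l4) * PC t
      - l2 * R t * PC t) t ∧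
    HasDerivAt PR (al * gam + b2 * R t + l5 * PC t - (eps + l7 + l3 + m * l4) * PR t
      - (l2 + mR * l6) * R t * PR t) t

/-- An equilibrium of the customer-dynamics model: all four right-hand sides vanish. -/
def IsEquilibrium (l1 l2 l3 l4 l5 l6 l7 b1 b2 eps gam m mR al : ℝ)
    (C R PC PR : ℝ) : Prop :=
  l7 * R - (eps + b1 + l5) * C + (l1 + m * l4) * PC + l2 * R * PC = 0 ∧
  l5 * C - (eps + b2 + l7) * R + (l3 + m * l4) * PR + (l2 + mR * l6) * R * PR = 0 ∧
  (1 - al) * gam + b1 * C + l7 * PR - (eps + l5 + l1 + m * l4) * PC - l2 * R * PC = 0 ∧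
  al * gam + b2 * R + l5 * PC - (eps + l7 + l3 + m * l4) * PR - (l2 + mR * l6) * R * PR = 0

/-! The vector field is quasi-positive: when one component vanishes and the others are
nonnegative, the derivative of that component is nonnegative. On a compact interval `[t0, t1]`
the trajectory is bounded by some `M`, so the bilinear terms make this quantitative: whenever a
component is a negative minimum of the four, its derivative is at least `L` times its value,
with `L` depending on the parameters and `M`. After adding `δ e^{(L+1)(t - t1)}` to every
component, the first component to reach zero would have positive derivative there, which is
impossible; letting `δ → 0` gives nonnegativity at `t1`. -/

open Set

theorem HasDerivWithinAt.nonpos_of_pos_of_nonpos {f : ℝ → ℝ} {d a s : ℝ}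
    (hf : HasDerivWithinAt f d (Icc a s) s) (has : a < s) (hs : f s ≤ 0)
    (hpos : ∀ t ∈ Ico a s, 0 < f t) : d ≤ 0 := by
  rw [hasDerivWithinAt_iff_tendsto_slope, Icc_sdiff_right] at hf
  have := right_nhdsWithin_Ico_neBot has
  refine le_of_tendsto hf (eventually_nhdsWithin_of_forall fun t ht => ?_)
  rw [slope_def_field]
  exact div_nonpos_of_nonneg_of_nonpos (by linarith [hpos t ht]) (by linarith [ht.2])

theorem exists_first_nonpos {ι : Type*} [Finite ι] {y : ι → ℝ → ℝ} {a b : ℝ}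
    (hy : ∀ i, ContinuousOn (y i) (Icc a b)) (ha : ∀ i, 0 < y i a)
    (hnonpos : ∃ t ∈ Icc a b, ∃ i, y i t ≤ 0) :
    ∃ s ∈ Ioc a b,
      (∃ i, y i s = 0) ∧ (∀ j, 0 ≤ y j s) ∧ ∀ j, ∀ t ∈ Ico a s, 0 < y j t := by
  set S := ⋃ i, Icc a b ∩ y i ⁻¹' Iic 0
  have hS : IsClosed S := isClosed_iUnion_of_finite fun i =>
    (hy i).preimage_isClosed_of_isClosed isClosed_Icc isClosed_Iic
  have hSbdd : BddBelow S := ⟨a, fun t ht => (mem_iUnion.1 ht).elim fun _ h => h.1.1⟩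
  obtain ⟨t, ht, i, hti⟩ := hnonpos
  obtain ⟨i, ⟨has, hsb⟩, hsi⟩ :=
    mem_iUnion.1 (hS.csInf_mem ⟨t, mem_iUnion.2 ⟨i, ht, hti⟩⟩ hSbdd)
  set s := sInf S
  have hbefore : ∀ j, ∀ t ∈ Ico a s, 0 < y j t := fun j t ht => by
    by_contra! h
    exact notMem_of_lt_csInf ht.2 hSbdd (mem_iUnion.2 ⟨j, ⟨ht.1, ht.2.le.trans hsb⟩, h⟩)
  have has' : a < s := has.lt_of_ne fun h => (ha i).not_ge (h ▸ hsi)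
  have hat : ∀ j, 0 ≤ y j s := fun j => by
    have hclosed : IsClosed (Icc a b ∩ y j ⁻¹' Ici 0) :=
      (hy j).preimage_isClosed_of_isClosed isClosed_Icc isClosed_Ici
    have hsub : Ico a s ⊆ Icc a b ∩ y j ⁻¹' Ici 0 := fun t ht =>
      ⟨⟨ht.1, ht.2.le.trans hsb⟩, (hbefore j t ht).le⟩
    have hs : s ∈ closure (Ico a s) := by rw [closure_Ico has'.ne]; exact right_mem_Icc.2 has
    exact (hclosed.closure_subset_iff.2 hsub hs).2
  exact ⟨s, ⟨has', hsb⟩, ⟨i, le_antisymm hsi (hat i)⟩, hat, hbefore⟩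

theorem nonneg_of_hasDerivWithinAt_of_quasiPositive {ι : Type*} [Finite ι]
    {x x' : ι → ℝ → ℝ} {a b L : ℝ} (hab : a ≤ b)
    (hx : ∀ i, ∀ t ∈ Icc a b, HasDerivWithinAt (x i) (x' i t) (Icc a b) t)
    (hquasi : ∀ t ∈ Icc a b, ∀ i, x i t < 0 → (∀ j, x i t ≤ x j t) → L * x i t ≤ x' i t)
    (ha : ∀ i, 0 ≤ x i a) (i : ι) : 0 ≤ x i b := by
  refine le_of_forall_pos_lt_add fun δ hδ => ?_
  set E : ℝ → ℝ := fun t => δ * Real.exp ((L + 1) * (t - b))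
  have hE : ∀ t, HasDerivAt E (E t * (L + 1)) t := fun t => by
    simpa [E, mul_assoc] using
      ((((hasDerivAt_id t).sub_const b).const_mul (L + 1)).exp).const_mul δ
  have hEpos : ∀ t, 0 < E t := fun t => by positivity
  set y : ι → ℝ → ℝ := fun i t => x i t + E t
  have hy : ∀ i, ∀ t ∈ Icc a b,
      HasDerivWithinAt (y i) (x' i t + E t * (L + 1)) (Icc a b) t :=
    fun i t ht => (hx i t ht).add (hE t).hasDerivWithinAt
  suffices h : ∀ i, 0 < y i b by simpa [y, E] using h i
  by_contra! hneg
  obtain ⟨j, hj⟩ := hneg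
  obtain ⟨s, ⟨has, hsb⟩, ⟨i, hi⟩, hnonneg, hbefore⟩ := exists_first_nonpos
    (fun i t ht => (hy i t ht).continuousWithinAt)
    (fun i => by simp only [y]; linarith [ha i, hEpos a]) ⟨b, right_mem_Icc.2 hab, j, hj⟩
  have hderiv : x' i s + E s * (L + 1) ≤ 0 :=
    ((hy i s ⟨has.le, hsb⟩).mono (Icc_subset_Icc_right hsb)).nonpos_of_pos_of_nonpos has hi.le
      (hbefore i)
  have hxi : x i s = -E s := by simp only [y] at hi; linarith
  have hmin : ∀ j, x i s ≤ x j s := fun j => by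
    have := hnonneg j
    simp only [y] at this
    linarith
  have := hquasi s ⟨has.le, hsb⟩ i (by linarith [hEpos s]) hmin
  rw [hxi] at this
  linarith [hEpos s]

theorem le_mul_of_mem_Icc {c M x y : ℝ} (hc : c ≤ 0) (hM : 0 ≤ M) (hx : x ∈ Icc c M)
    (hy : y ∈ Icc c M) : M * c ≤ x * y := by
  obtain ⟨hcx, hxM⟩ := hx
  obtain ⟨hcy, hyM⟩ := hy
  rcases le_total 0 x with hx0 | hx0
  · nlinarith [mul_nonneg hx0 (sub_nonneg.2 hcy)]
  · nlinarith [mul_nonneg (sub_nonneg.2 hyM) (neg_nonneg.2 hx0)]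

theorem exists_abs_le_of_continuousOn {ι : Type*} [Fintype ι] {x : ι → ℝ → ℝ} {K : Set ℝ}
    (hK : IsCompact K) (hx : ∀ i, ContinuousOn (x i) K) :
    ∃ M, ∀ t ∈ K, ∀ i, |x i t| ≤ M := by
  obtain ⟨M, hM⟩ :=
    hK.exists_bound_of_continuousOn (f := fun t i => x i t) (continuousOn_pi.2 hx)
  exact ⟨M, fun t ht i => (norm_le_pi_norm (fun i => x i t) i).trans (hM t ht)⟩

section CustomerModel

variable (l1 l2 l3 l4 l5 l6 l7 b1 b2 eps gam m mR al : ℝ)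

/-- The right-hand side of the model in the coordinates `(C, R, PC, PR) = (x 0, ..., x 3)`. -/
def customerField (x : Fin 4 → ℝ) : Fin 4 → ℝ :=
  ![l7 * x 1 - (eps + b1 + l5) * x 0 + (l1 + m * l4) * x 2 + l2 * x 1 * x 2,
    l5 * x 0 - (eps + b2 + l7) * x 1 + (l3 + m * l4) * x 3 + (l2 + mR * l6) * x 1 * x 3,
    (1 - al) * gam + b1 * x 0 + l7 * x 3 - (eps + l5 + l1 + m * l4) * x 2 - l2 * x 1 * x 2,
    al * gam + b2 * x 1 + l5 * x 2 - (eps + l7 + l3 + m * l4) * x 3 - (l2 + mR * l6) * x 1 * x 3]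

variable {l1 l2 l3 l4 l5 l6 l7 b1 b2 eps gam m mR al}

theorem customerField_quasiPositive (hl1 : 0 ≤ l1) (hl2 : 0 ≤ l2) (hl3 : 0 ≤ l3)
    (hl4 : 0 ≤ l4) (hl5 : 0 ≤ l5) (hl6 : 0 ≤ l6) (hl7 : 0 ≤ l7) (hb1 : 0 ≤ b1) (hb2 : 0 ≤ b2)
    (heps : 0 ≤ eps) (hgam : 0 ≤ gam) (hm : 0 ≤ m) (hmR : 0 ≤ mR) (hal0 : 0 ≤ al)
    (hal1 : al ≤ 1) {M : ℝ} {x : Fin 4 → ℝ} (hM : ∀ j, |x j| ≤ M) (i : Fin 4) (hi : x i < 0)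
    (hmin : ∀ j, x i ≤ x j) :
    (l1 + l3 + l5 + l7 + b1 + b2 + m * l4 + (2 * l2 + mR * l6) * M) * x i ≤
      customerField l1 l2 l3 l4 l5 l6 l7 b1 b2 eps gam m mR al x i := by
  have hM0 : 0 ≤ M := (abs_nonneg _).trans (hM 0)
  have hmem : ∀ j, x j ∈ Icc (-M) M := fun j => abs_le.1 (hM j)
  have hml4 : 0 ≤ m * l4 := mul_nonneg hm hl4
  have hmRl6 : 0 ≤ mR * l6 := mul_nonneg hmR hl6
  have hMl2 : 0 ≤ M * l2 := mul_nonneg hM0 hl2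
  have hMmRl6 : 0 ≤ M * (mR * l6) := mul_nonneg hM0 hmRl6
  fin_cases i <;> simp only [Fin.zero_eta, Fin.mk_one, Fin.reduceFinMk, Fin.isValue,
    customerField, Matrix.cons_val_zero, Matrix.cons_val_one, Matrix.cons_val] at hi hmin ⊢
  · have hprod := le_mul_of_mem_Icc hi.le hM0 ⟨hmin 1, (hmem 1).2⟩ ⟨hmin 2, (hmem 2).2⟩
    nlinarith [mul_le_mul_of_nonneg_left (hmin 1) hl7,
      mul_le_mul_of_nonneg_left (hmin 2) (add_nonneg hl1 hml4),
      mul_le_mul_of_nonneg_left hprod hl2,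
      mul_nonpos_of_nonneg_of_nonpos (by positivity : 0 ≤ eps + b1 + l5) hi.le]
  · have hprod := mul_le_mul_of_nonpos_left (hmem 3).2 hi.le
    nlinarith [mul_le_mul_of_nonneg_left (hmin 0) hl5,
      mul_le_mul_of_nonneg_left (hmin 3) (add_nonneg hl3 hml4),
      mul_le_mul_of_nonneg_left hprod (add_nonneg hl2 hmRl6),
      mul_nonpos_of_nonneg_of_nonpos (by positivity : 0 ≤ eps + b2 + l7) hi.le]
  · have hprod := mul_le_mul_of_nonpos_left (neg_le.1 (hmem 1).1) hi.le
    nlinarith [mul_nonneg (sub_nonneg.2 hal1) hgam, mul_le_mul_of_nonneg_left (hmin 0) hb1,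
      mul_le_mul_of_nonneg_left (hmin 3) hl7, mul_le_mul_of_nonneg_left hprod hl2,
      mul_nonpos_of_nonneg_of_nonpos (by positivity : 0 ≤ eps + l5 + l1 + m * l4) hi.le]
  · have hprod := mul_le_mul_of_nonpos_left (neg_le.1 (hmem 1).1) hi.le
    nlinarith [mul_nonneg hal0 hgam, mul_le_mul_of_nonneg_left (hmin 1) hb2,
      mul_le_mul_of_nonneg_left (hmin 2) hl5,
      mul_le_mul_of_nonneg_left hprod (add_nonneg hl2 hmRl6),
      mul_nonpos_of_nonneg_of_nonpos (by positivity : 0 ≤ eps + l7 + l3 + m * l4) hi.le]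

end CustomerModel

theorem positivity_of_solutions_general (l1 l2 l3 l4 l5 l6 l7 b1 b2 eps gam m mR al : ℝ) (t0 : ℝ) (C R PC PR : ℝ → ℝ)
    (hl1 : 0 ≤ l1) (hl2 : 0 ≤ l2) (hl3 : 0 ≤ l3) (hl4 : 0 ≤ l4) (hl5 : 0 ≤ l5)
    (hl6 : 0 ≤ l6) (hl7 : 0 ≤ l7) (hb1 : 0 ≤ b1) (hb2 : 0 ≤ b2) (heps0 : 0 ≤ eps)
    (hgam : 0 ≤ gam) (hm : 0 ≤ m) (hmR : 0 ≤ mR) (hal0 : 0 ≤ al) (hal1 : al ≤ 1)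
    (hsol : IsSolution l1 l2 l3 l4 l5 l6 l7 b1 b2 eps gam m mR al t0 C R PC PR)
    (hC0 : 0 ≤ C t0) (hR0 : 0 ≤ R t0) (hPC0 : 0 ≤ PC t0) (hPR0 : 0 ≤ PR t0) :
    ∀ t : ℝ, t0 ≤ t → 0 ≤ C t ∧ 0 ≤ R t ∧ 0 ≤ PC t ∧ 0 ≤ PR t := by
  intro t1 ht1
  set x : Fin 4 → ℝ → ℝ := ![C, R, PC, PR]
  have hx : ∀ i, ∀ t ∈ Icc t0 t1,
      HasDerivAt (x i)
        (customerField l1 l2 l3 l4 l5 l6 l7 b1 b2 eps gam m mR al (x · t) i) t := by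
    intro i t ht
    obtain ⟨hC, hR, hPC, hPR⟩ := hsol t ht.1
    fin_cases i
    exacts [hC, hR, hPC, hPR]
  obtain ⟨M, hM⟩ := exists_abs_le_of_continuousOn isCompact_Icc fun i t ht =>
    (hx i t ht).continuousAt.continuousWithinAt
  have hnonneg := nonneg_of_hasDerivWithinAt_of_quasiPositive ht1
    (fun i t ht => (hx i t ht).hasDerivWithinAt)
    (fun t ht => customerField_quasiPositive hl1 hl2 hl3 hl4 hl5 hl6 hl7 hb1 hb2 heps0 hgam hm
      hmR hal0 hal1 (hM t ht))
    (by simpa [Fin.forall_fin_succ, x] using ⟨hC0, hR0, hPC0, hPR0⟩)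
  exact ⟨hnonneg 0, hnonneg 1, hnonneg 2, hnonneg 3⟩

theorem positivity_of_solutions (l1 l2 l3 l4 l5 l6 l7 b1 b2 eps gam m mR al : ℝ) (t0 : ℝ) (C R PC PR : ℝ → ℝ)
    (hl1 : 0 ≤ l1) (hl2 : 0 ≤ l2) (hl3 : 0 ≤ l3) (hl4 : 0 ≤ l4) (hl5 : 0 ≤ l5)
    (hl6 : 0 ≤ l6) (hl7 : 0 ≤ l7) (hb1 : 0 ≤ b1) (hb2 : 0 ≤ b2) (heps0 : 0 ≤ eps)
    (hgam : 0 ≤ gam) (hm : 0 ≤ m) (hmR : 0 ≤ mR) (hal0 : 0 ≤ al) (hal1 : al ≤ 1)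
    (heps : 0 < eps)
    (hsol : IsSolution l1 l2 l3 l4 l5 l6 l7 b1 b2 eps gam m mR al t0 C R PC PR)
    (hC0 : 0 ≤ C t0) (hR0 : 0 ≤ R t0) (hPC0 : 0 ≤ PC t0) (hPR0 : 0 ≤ PR t0) :
    ∀ t : ℝ, t0 ≤ t → 0 ≤ C t ∧ 0 ≤ R t ∧ 0 ≤ PC t ∧ 0 ≤ PR t :=
  positivity_of_solutions_general l1 l2 l3 l4 l5 l6 l7 b1 b2 eps gam m mR al t0 C R PC PR hl1 hl2
    hl3 hl4 hl5 hl6 hl7 hb1 hb2 heps0 hgam hm hmR hal0 hal1 hsol hC0 hR0 hPC0 hPR0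
end

section
/- Let ε > 0 and let (C(t), R(t), P_C(t), P_R(t)) be a solution of the customer-dynamics model on [t₀, ∞). Then R(t) + P_R(t) tends to p and C(t) + P_C(t) tends to q as t → +∞; moreover the differences R(t)+P_R(t)−p and C(t)+P_C(t)−q are linear combinations of e^{−(ε+λ₅+λ₇)t} and e^{−εt}. -/
open Real Filter Topology

/-!
Adding the four equations cancels every interaction term: the total population
`U = C + P_C + R + P_R` obeys `U' = γ - ε U`, and adding the `R` and `P_R` equations gives the
linear equation `(R + P_R)' = α γ + λ₅ U - (ε + λ₅ + λ₇) (R + P_R)`. Solving the first and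
substituting into the second, both partial sums are explicit exponential expressions.
-/

theorem hasDerivAt_exp_const_mul (c t : ℝ) :
    HasDerivAt (fun t => exp (c * t)) (exp (c * t) * c) t := by
  simpa using ((hasDerivAt_id t).const_mul c).exp

theorem exists_eq_mul_exp_of_hasDerivAt {g : ℝ → ℝ} {c t0 : ℝ}
    (hg : ∀ t, t0 ≤ t → HasDerivAt g (-c * g t) t) :
    ∃ A, ∀ t, t0 ≤ t → g t = A * exp (-c * t) := by
  have hderiv : ∀ t, t0 ≤ t → HasDerivAt (fun t => g t * exp (c * t)) 0 t := by
    intro t ht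
    exact ((hg t ht).mul (hasDerivAt_exp_const_mul c t)).congr_deriv (by ring)
  refine ⟨g t0 * exp (c * t0), fun t ht => ?_⟩
  have hconst : g t * exp (c * t) = g t0 * exp (c * t0) :=
    constant_of_has_deriv_right_zero
      (fun x hx => (hderiv x hx.1).continuousAt.continuousWithinAt)
      (fun x hx => (hderiv x hx.1).hasDerivWithinAt) t ⟨ht, le_rfl⟩
  rw [← hconst, mul_assoc, ← exp_add]
  simp

/-- In the resonant case `c = d` the hypothesis `hB` forces `b = 0`. -/
theorem exists_eq_add_exp_of_hasDerivAt {f : ℝ → ℝ} {a b c d B t0 : ℝ} (hc : c ≠ 0)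
    (hB : (c - d) * B = b)
    (hf : ∀ t, t0 ≤ t → HasDerivAt f (a + b * exp (-d * t) - c * f t) t) :
    ∃ A, ∀ t, t0 ≤ t → f t = a / c + A * exp (-c * t) + B * exp (-d * t) := by
  have hg : ∀ t, t0 ≤ t → HasDerivAt (fun t => f t - a / c - B * exp (-d * t))
      (-c * (f t - a / c - B * exp (-d * t))) t := by
    intro t ht
    refine (((hf t ht).sub_const (a / c)).sub
      ((hasDerivAt_exp_const_mul (-d) t).const_mul B)).congr_deriv ?_
    linear_combination -mul_div_cancel₀ a hc - exp (-d * t) * hB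
  obtain ⟨A, hA⟩ := exists_eq_mul_exp_of_hasDerivAt hg
  exact ⟨A, fun t ht => by linarith [hA t ht]⟩

theorem tendsto_exp_neg_mul_atTop_nhds_zero {c : ℝ} (hc : 0 < c) :
    Tendsto (fun t => exp (-c * t)) atTop (𝓝 0) :=
  tendsto_exp_comp_nhds_zero.mpr (tendsto_id.const_mul_atTop_of_neg (neg_lt_zero.mpr hc))

theorem tendsto_add_mul_exp_add_mul_exp {a A B c d : ℝ} (hc : 0 < c) (hd : 0 < d) :
    Tendsto (fun t => a + A * exp (-c * t) + B * exp (-d * t)) atTop (𝓝 a) := by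
  simpa using (tendsto_const_nhds.add
    ((tendsto_exp_neg_mul_atTop_nhds_zero hc).const_mul A)).add
    ((tendsto_exp_neg_mul_atTop_nhds_zero hd).const_mul B)

namespace IsSolution

variable {l1 l2 l3 l4 l5 l6 l7 b1 b2 eps gam m mR al t0 : ℝ} {C R PC PR : ℝ → ℝ}

theorem hasDerivAt_total (hsol : IsSolution l1 l2 l3 l4 l5 l6 l7 b1 b2 eps gam m mR al t0 C R PC PR)
    {t : ℝ} (ht : t0 ≤ t) :
    HasDerivAt (fun t => C t + PC t + R t + PR t)
      (gam - eps * (C t + PC t + R t + PR t)) t := by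
  obtain ⟨hC, hR, hPC, hPR⟩ := hsol t ht
  exact (((hC.add hPC).add hR).add hPR).congr_deriv (by ring)

theorem hasDerivAt_R_add_PR
    (hsol : IsSolution l1 l2 l3 l4 l5 l6 l7 b1 b2 eps gam m mR al t0 C R PC PR)
    {t : ℝ} (ht : t0 ≤ t) :
    HasDerivAt (fun t => R t + PR t)
      (al * gam + l5 * (C t + PC t + R t + PR t) - (eps + l5 + l7) * (R t + PR t)) t := by
  obtain ⟨-, hR, -, hPR⟩ := hsol t ht
  exact (hR.add hPR).congr_deriv (by ring)

theorem exists_total_eq (hsol : IsSolution l1 l2 l3 l4 l5 l6 l7 b1 b2 eps gam m mR al t0 C R PC PR)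
    (heps : 0 < eps) :
    ∃ A, ∀ t, t0 ≤ t → C t + PC t + R t + PR t = gam / eps + A * exp (-eps * t) := by
  have hg : ∀ t, t0 ≤ t → HasDerivAt (fun t => C t + PC t + R t + PR t - gam / eps)
      (-eps * (C t + PC t + R t + PR t - gam / eps)) t := fun t ht =>
    ((hsol.hasDerivAt_total ht).sub_const _).congr_deriv (by field_simp; ring)
  obtain ⟨A, hA⟩ := exists_eq_mul_exp_of_hasDerivAt hg
  exact ⟨A, fun t ht => by linarith [hA t ht]⟩

theorem exists_R_add_PR_eq
    (hsol : IsSolution l1 l2 l3 l4 l5 l6 l7 b1 b2 eps gam m mR al t0 C R PC PR)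
    (heps : 0 < eps) (hl5 : 0 ≤ l5) (hl7 : 0 ≤ l7) :
    ∃ c1 c2, ∀ t, t0 ≤ t → R t + PR t = gam * (al * eps + l5) / (eps * (eps + l5 + l7))
      + c1 * exp (-(eps + l5 + l7) * t) + c2 * exp (-eps * t) := by
  obtain ⟨A, hA⟩ := hsol.exists_total_eq heps
  -- When `l5 + l7 = 0` the division is junk, but then `l5 = 0` and the forcing term vanishes.
  have hB : (eps + l5 + l7 - eps) * (l5 * A / (l5 + l7)) = l5 * A := by
    rcases (add_nonneg hl5 hl7).eq_or_lt with h | h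
    · simp [show l5 = 0 by linarith]
    · field_simp; ring
  have hderiv : ∀ t, t0 ≤ t → HasDerivAt (fun t => R t + PR t)
      (al * gam + l5 * (gam / eps) + l5 * A * exp (-eps * t)
        - (eps + l5 + l7) * (R t + PR t)) t := fun t ht =>
    (hsol.hasDerivAt_R_add_PR ht).congr_deriv (by rw [hA t ht]; ring)
  obtain ⟨c1, hc1⟩ := exists_eq_add_exp_of_hasDerivAt (by positivity) hB hderiv
  have hp : (al * gam + l5 * (gam / eps)) / (eps + l5 + l7)
      = gam * (al * eps + l5) / (eps * (eps + l5 + l7)) := by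
    field_simp
  exact ⟨c1, l5 * A / (l5 + l7), fun t ht => hp ▸ hc1 t ht⟩

end IsSolution

theorem partial_sums_tendsto_general (l1 l2 l3 l4 l5 l6 l7 b1 b2 eps gam m mR al : ℝ) (p q t0 : ℝ) (C R PC PR : ℝ → ℝ)
    (hl5 : 0 ≤ l5) (hl7 : 0 ≤ l7) (heps : 0 < eps)
    (hp : p = gam * (al * eps + l5) / (eps * (eps + l5 + l7)))
    (hq : q = gam * ((1 - al) * eps + l7) / (eps * (eps + l5 + l7)))
    (hsol : IsSolution l1 l2 l3 l4 l5 l6 l7 b1 b2 eps gam m mR al t0 C R PC PR) :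
    Tendsto (fun t => R t + PR t) atTop (𝓝 p) ∧
    Tendsto (fun t => C t + PC t) atTop (𝓝 q) ∧
    ∃ c1 c2 c3 c4 : ℝ, ∀ t : ℝ, t0 ≤ t →
      R t + PR t - p = c1 * Real.exp (-(eps + l5 + l7) * t) + c2 * Real.exp (-eps * t) ∧
      C t + PC t - q = c3 * Real.exp (-(eps + l5 + l7) * t) + c4 * Real.exp (-eps * t) := by
  obtain ⟨A, hU⟩ := hsol.exists_total_eq heps
  obtain ⟨c1, c2, hT⟩ := hsol.exists_R_add_PR_eq heps hl5 hl7
  rw [← hp] at hT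
  have hpq : p + q = gam / eps := by
    rw [hp, hq]
    field_simp
    ring
  have hS : ∀ t, t0 ≤ t → C t + PC t
      = q + -c1 * exp (-(eps + l5 + l7) * t) + (A - c2) * exp (-eps * t) := fun t ht => by
    linarith [hU t ht, hT t ht]
  have hk : 0 < eps + l5 + l7 := by positivity
  refine ⟨?_, ?_, c1, c2, -c1, A - c2, fun t ht => ⟨by linarith [hT t ht], by linarith [hS t ht]⟩⟩
  · exact (tendsto_add_mul_exp_add_mul_exp hk heps).congr'
      ((eventually_ge_atTop t0).mono fun t ht => (hT t ht).symm)
  · exact (tendsto_add_mul_exp_add_mul_exp hk heps).congr'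
      ((eventually_ge_atTop t0).mono fun t ht => (hS t ht).symm)

theorem partial_sums_tendsto (l1 l2 l3 l4 l5 l6 l7 b1 b2 eps gam m mR al : ℝ) (p q t0 : ℝ) (C R PC PR : ℝ → ℝ)
    (hl1 : 0 ≤ l1) (hl2 : 0 ≤ l2) (hl3 : 0 ≤ l3) (hl4 : 0 ≤ l4) (hl5 : 0 ≤ l5)
    (hl6 : 0 ≤ l6) (hl7 : 0 ≤ l7) (hb1 : 0 ≤ b1) (hb2 : 0 ≤ b2) (heps0 : 0 ≤ eps)
    (hgam : 0 ≤ gam) (hm : 0 ≤ m) (hmR : 0 ≤ mR) (hal0 : 0 ≤ al) (hal1 : al ≤ 1)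
    (heps : 0 < eps)
    (hp : p = gam * (al * eps + l5) / (eps * (eps + l5 + l7)))
    (hq : q = gam * ((1 - al) * eps + l7) / (eps * (eps + l5 + l7)))
    (hsol : IsSolution l1 l2 l3 l4 l5 l6 l7 b1 b2 eps gam m mR al t0 C R PC PR) :
    Tendsto (fun t => R t + PR t) atTop (𝓝 p) ∧
    Tendsto (fun t => C t + PC t) atTop (𝓝 q) ∧
    ∃ c1 c2 c3 c4 : ℝ, ∀ t : ℝ, t0 ≤ t →
      R t + PR t - p = c1 * Real.exp (-(eps + l5 + l7) * t) + c2 * Real.exp (-eps * t) ∧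
      C t + PC t - q = c3 * Real.exp (-(eps + l5 + l7) * t) + c4 * Real.exp (-eps * t) :=
  partial_sums_tendsto_general l1 l2 l3 l4 l5 l6 l7 b1 b2 eps gam m mR al p q t0 C R PC PR hl5 hl7
    heps hp hq hsol
end

section
/- Let ε > 0 and λ₅ > 0. If (C*, R*, P_C*, P_R*) is an equilibrium of the customer-dynamics model, then R* is a root of the cubic equation a R³ + b R² + c R + d = 0, where a = −λ₂(λ₂+m_Rλ₆), b = λ₂(λ₂+m_Rλ₆)p − u(λ₂+m_Rλ₆) − λ₂v, c = λ₂(λ₃+mλ₄)p + u(λ₂+m_Rλ₆)p + (λ₇+λ₂q)λ₅ − uv, and d = (λ₃+mλ₄)pu + (λ₁+mλ₄)qλ₅. -/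
open Real Filter Topology

theorem equilibrium_R_is_cubic_root (l1 l2 l3 l4 l5 l6 l7 b1 b2 eps gam m mR al : ℝ) (p q u v A B Cc D : ℝ) (Cs Rs PCs PRs : ℝ)
    (hl1 : 0 ≤ l1) (hl2 : 0 ≤ l2) (hl3 : 0 ≤ l3) (hl4 : 0 ≤ l4) (hl5 : 0 ≤ l5)
    (hl6 : 0 ≤ l6) (hl7 : 0 ≤ l7) (hb1 : 0 ≤ b1) (hb2 : 0 ≤ b2) (heps0 : 0 ≤ eps)
    (hgam : 0 ≤ gam) (hm : 0 ≤ m) (hmR : 0 ≤ mR) (hal0 : 0 ≤ al) (hal1 : al ≤ 1)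
    (heps : 0 < eps) (hl5pos : 0 < l5)
    (hp : p = gam * (al * eps + l5) / (eps * (eps + l5 + l7)))
    (hq : q = gam * ((1 - al) * eps + l7) / (eps * (eps + l5 + l7)))
    (hu : u = eps + b1 + l5 + l1 + m * l4) (hv : v = eps + b2 + l7 + l3 + m * l4)
    (hA : A = -(l2 * (l2 + mR * l6)))
    (hB : B = l2 * (l2 + mR * l6) * p - u * (l2 + mR * l6) - l2 * v)
    (hCc : Cc = l2 * (l3 + m * l4) * p + u * (l2 + mR * l6) * p + (l7 + l2 * q) * l5 - u * v)
    (hD : D = (l3 + m * l4) * p * u + (l1 + m * l4) * q * l5)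
    (heq : IsEquilibrium l1 l2 l3 l4 l5 l6 l7 b1 b2 eps gam m mR al Cs Rs PCs PRs) :
    A * Rs ^ 3 + B * Rs ^ 2 + Cc * Rs + D = 0 := by
  obtain ⟨e1, e2, e3, e4⟩ := heq
  have hd : eps * (eps + l5 + l7) ≠ 0 := by positivity
  have hp' : p * (eps * (eps + l5 + l7)) = gam * (al * eps + l5) := by
    rw [hp]; field_simp
  have hq' : q * (eps * (eps + l5 + l7)) = gam * ((1 - al) * eps + l7) := by
    rw [hq]; field_simp
  have hC : Cs + PCs = q := by
    have key : eps * (eps + l5 + l7) * (Cs + PCs - q) = 0 := by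
      linear_combination (-(eps + l7)) * e1 + (-(eps + l7)) * e3 + (-l7) * e2 + (-l7) * e4 - hq'
    have := mul_eq_zero.mp key
    rcases this with h | h
    · exact absurd h hd
    · linarith
  have hR : Rs + PRs = p := by
    have key : eps * (eps + l5 + l7) * (Rs + PRs - p) = 0 := by
      linear_combination (-l5) * e1 + (-l5) * e3 + (-(eps + l5)) * e2 + (-(eps + l5)) * e4 - hp'
    have := mul_eq_zero.mp key
    rcases this with h | h
    · exact absurd h hd
    · linarith
  subst hu hv hA hB hCc hD
  linear_combination ((eps + b1 + l5 + l1 + m * l4) + l2 * Rs) * e2 + l5 * e1 +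
    (-(l5 * (l1 + m * l4)) - l5 * l2 * Rs) * hC +
    (-((eps + b1 + l5 + l1 + m * l4) + l2 * Rs) * ((l3 + m * l4) + (l2 + mR * l6) * Rs)) * hR
end

section
/- Let ε > 0 and λ₅ > 0, and suppose the coefficients a = −λ₂(λ₂+m_Rλ₆), b = λ₂(λ₂+m_Rλ₆)p − u(λ₂+m_Rλ₆) − λ₂v, c = λ₂(λ₃+mλ₄)p + u(λ₂+m_Rλ₆)p + (λ₇+λ₂q)λ₅ − uv, d = (λ₃+mλ₄)pu + (λ₁+mλ₄)qλ₅ are not all zero. Then the set of equilibria of the customer-dynamics model has at most three elements. -/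
open Real Filter Topology

theorem at_most_three_equilibria (l1 l2 l3 l4 l5 l6 l7 b1 b2 eps gam m mR al : ℝ) (p q u v A B Cc D : ℝ)
    (hl1 : 0 ≤ l1) (hl2 : 0 ≤ l2) (hl3 : 0 ≤ l3) (hl4 : 0 ≤ l4) (hl5 : 0 ≤ l5)
    (hl6 : 0 ≤ l6) (hl7 : 0 ≤ l7) (hb1 : 0 ≤ b1) (hb2 : 0 ≤ b2) (heps0 : 0 ≤ eps)
    (hgam : 0 ≤ gam) (hm : 0 ≤ m) (hmR : 0 ≤ mR) (hal0 : 0 ≤ al) (hal1 : al ≤ 1)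
    (heps : 0 < eps) (hl5pos : 0 < l5)
    (hp : p = gam * (al * eps + l5) / (eps * (eps + l5 + l7)))
    (hq : q = gam * ((1 - al) * eps + l7) / (eps * (eps + l5 + l7)))
    (hu : u = eps + b1 + l5 + l1 + m * l4) (hv : v = eps + b2 + l7 + l3 + m * l4)
    (hA : A = -(l2 * (l2 + mR * l6)))
    (hB : B = l2 * (l2 + mR * l6) * p - u * (l2 + mR * l6) - l2 * v)
    (hCc : Cc = l2 * (l3 + m * l4) * p + u * (l2 + mR * l6) * p + (l7 + l2 * q) * l5 - u * v)
    (hD : D = (l3 + m * l4) * p * u + (l1 + m * l4) * q * l5)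
    (hnz : ¬ (A = 0 ∧ B = 0 ∧ Cc = 0 ∧ D = 0)) :
    ∃ e1 e2 e3 : ℝ × ℝ × ℝ × ℝ, ∀ e : ℝ × ℝ × ℝ × ℝ,
      IsEquilibrium l1 l2 l3 l4 l5 l6 l7 b1 b2 eps gam m mR al e.1 e.2.1 e.2.2.1 e.2.2.2 →
      e = e1 ∨ e = e2 ∨ e = e3 := by
  classical
  set g : ℝ → ℝ := fun r =>
    (-(l2+mR*l6)*r^2 + ((l2+mR*l6)*p - v)*r + (l3+m*l4)*p + l5*q)/l5 with hg
  set φ : ℝ → ℝ × ℝ × ℝ × ℝ := fun r => (q - g r, r, g r, p - r) with hφ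
  set P : Polynomial ℝ := Polynomial.C A * Polynomial.X^3 + Polynomial.C B * Polynomial.X^2
    + Polynomial.C Cc * Polynomial.X + Polynomial.C D with hPdef
  have hP0 : P ≠ 0 := by
    intro h
    apply hnz
    refine ⟨?_, ?_, ?_, ?_⟩
    · have := congrArg (fun Q : Polynomial ℝ => Q.coeff 3) h
      simpa [hPdef] using this
    · have := congrArg (fun Q : Polynomial ℝ => Q.coeff 2) h
      simpa [hPdef] using this
    · have := congrArg (fun Q : Polynomial ℝ => Q.coeff 1) h
      simpa [hPdef] using this
    · have := congrArg (fun Q : Polynomial ℝ => Q.coeff 0) h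
      simpa [hPdef] using this
  have hdeg : P.natDegree ≤ 3 := by rw [hPdef]; compute_degree
  have hlen : (Multiset.toList P.roots).length ≤ 3 := by
    rw [Multiset.length_toList]
    exact le_trans (Polynomial.card_roots' P) hdeg
  set l := P.roots.toList with hl
  refine ⟨φ (l.getD 0 0), φ (l.getD 1 0), φ (l.getD 2 0), ?_⟩
  rintro ⟨C0, R0, PC0, PR0⟩ ⟨h1, h2, h3, h4⟩
  simp only at h1 h2 h3 h4
  subst hu hv hA hB hCc hD
  have hdet : eps * (eps + l5 + l7) ≠ 0 := by positivity
  have hpq1 : (eps + l5) * q - l7 * p = (1 - al) * gam := by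
    rw [hp, hq]; field_simp; ring
  have hpq2 : (eps + l7) * p - l5 * q = al * gam := by
    rw [hp, hq]; field_simp; ring
  have hY : R0 + PR0 = p := by
    rw [hp, eq_div_iff hdet]
    linear_combination (-l5)*h1 + (-l5)*h3 + (-(eps+l5))*h2 + (-(eps+l5))*h4
  have hX : C0 + PC0 = q := by
    rw [hq, eq_div_iff hdet]
    linear_combination (-(eps+l7))*h1 + (-(eps+l7))*h3 + (-l7)*h2 + (-l7)*h4
  have hPR : PR0 = p - R0 := by linarith
  have hPC5 : l5 * PC0 = -(l2+mR*l6)*R0^2 + ((l2+mR*l6)*p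
      - (eps + b2 + l7 + l3 + m * l4))*R0 + (l3+m*l4)*p + l5*q := by
    linear_combination h4 + ((eps + l7 + l3 + m*l4) + (l2+mR*l6)*R0) * hPR + hpq2
  have hPC : PC0 = g R0 := by
    rw [hg]
    field_simp
    linear_combination hPC5
  have hC : C0 = q - g R0 := by rw [← hPC]; linarith
  have hcubic : -(l2 * (l2 + mR * l6)) * R0^3
      + (l2 * (l2 + mR * l6) * p - (eps + b1 + l5 + l1 + m * l4) * (l2 + mR * l6)
        - l2 * (eps + b2 + l7 + l3 + m * l4)) * R0^2
      + (l2 * (l3 + m * l4) * p + (eps + b1 + l5 + l1 + m * l4) * (l2 + mR * l6) * p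
        + (l7 + l2 * q) * l5
        - (eps + b1 + l5 + l1 + m * l4) * (eps + b2 + l7 + l3 + m * l4)) * R0
      + ((l3 + m * l4) * p * (eps + b1 + l5 + l1 + m * l4) + (l1 + m * l4) * q * l5) = 0 := by
    linear_combination (-((eps + b1 + l5 + l1 + m*l4) + l2*R0)) * hPC5 + l5*b1*hX
      + l5*l7*hPR - l5*hpq1 - l5*h3
  have hroot : R0 ∈ l := by
    rw [hl, Multiset.mem_toList, Polynomial.mem_roots hP0]
    show P.IsRoot R0
    rw [Polynomial.IsRoot, hPdef]
    simp only [Polynomial.eval_add, Polynomial.eval_mul, Polynomial.eval_pow,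
      Polynomial.eval_C, Polynomial.eval_X]
    linear_combination hcubic
  have heq : (C0, R0, PC0, PR0) = φ R0 := by
    rw [hC, hPC, hPR, hφ]
  have h3mem : R0 = l.getD 0 0 ∨ R0 = l.getD 1 0 ∨ R0 = l.getD 2 0 := by
    clear_value l
    clear hl
    match l, hlen with
    | [], _ => simp at hroot
    | [a], _ => simp_all
    | [a, b], _ => simp at hroot ⊢; tauto
    | [a, b, c], _ => simp at hroot ⊢; tauto
  rcases h3mem with h | h | h
  · left; rw [heq, h]
  · right; left; rw [heq, h]
  · right; right; rw [heq, h]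
end

section
/- Let ε > 0 and λ₅ > 0. Every equilibrium (C*, R*, P_C*, P_R*) of the customer-dynamics model satisfies P_R* = p − R*, P_C* = q − C*, and C* = [(ε+β₂+λ₇)R* − (λ₃+mλ₄+(λ₂+m_Rλ₆)R*)(p−R*)] / λ₅. -/
open Real Filter Topology

theorem equilibrium_components (l1 l2 l3 l4 l5 l6 l7 b1 b2 eps gam m mR al : ℝ) (p q : ℝ) (Cs Rs PCs PRs : ℝ)
    (hl1 : 0 ≤ l1) (hl2 : 0 ≤ l2) (hl3 : 0 ≤ l3) (hl4 : 0 ≤ l4) (hl5 : 0 ≤ l5)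
    (hl6 : 0 ≤ l6) (hl7 : 0 ≤ l7) (hb1 : 0 ≤ b1) (hb2 : 0 ≤ b2) (heps0 : 0 ≤ eps)
    (hgam : 0 ≤ gam) (hm : 0 ≤ m) (hmR : 0 ≤ mR) (hal0 : 0 ≤ al) (hal1 : al ≤ 1)
    (heps : 0 < eps) (hl5pos : 0 < l5)
    (hp : p = gam * (al * eps + l5) / (eps * (eps + l5 + l7)))
    (hq : q = gam * ((1 - al) * eps + l7) / (eps * (eps + l5 + l7)))
    (heq : IsEquilibrium l1 l2 l3 l4 l5 l6 l7 b1 b2 eps gam m mR al Cs Rs PCs PRs) :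
    PRs = p - Rs ∧ PCs = q - Cs ∧
    Cs = ((eps + b2 + l7) * Rs - (l3 + m * l4 + (l2 + mR * l6) * Rs) * (p - Rs)) / l5 := by
  obtain ⟨e1, e2, e3, e4⟩ := heq
  have hD : eps * (eps + l5 + l7) ≠ 0 := by positivity
  have h13 : (1 - al) * gam + l7 * (Rs + PRs) - (eps + l5) * (Cs + PCs) = 0 := by
    linear_combination e1 + e3
  have h24 : al * gam + l5 * (Cs + PCs) - (eps + l7) * (Rs + PRs) = 0 := by
    linear_combination e2 + e4
  have hv : Rs + PRs = p := by
    rw [hp, eq_div_iff hD]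
    linear_combination (-l5) * h13 - (eps + l5) * h24
  have hu : Cs + PCs = q := by
    rw [hq, eq_div_iff hD]
    linear_combination (-(eps + l7)) * h13 - l7 * h24
  have hPR : PRs = p - Rs := by linarith
  refine ⟨hPR, by linarith, ?_⟩
  rw [eq_div_iff hl5pos.ne']
  linear_combination e2 - (l3 + m * l4 + (l2 + mR * l6) * Rs) * hPR
end

section
/- (Word of mouth, τ ≤ 1) Let ε > 0, λ₂ > 0, λ₁ = λ₃ = λ₄ = λ₅ = λ₇ = 0 and suppose τ ≤ 1. Then (C*, R*, P_C*, P_R*) = (0, 0, γ(1−α)/ε, γα/ε) is an equilibrium of the customer-dynamics model, and it is the unique equilibrium with all four components nonnegative. -/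
open Real Filter Topology

theorem word_of_mouth_tau_le_one (l1 l2 l3 l4 l5 l6 l7 b1 b2 eps gam m mR al : ℝ) (tau : ℝ)
    (hl1 : 0 ≤ l1) (hl2 : 0 ≤ l2) (hl3 : 0 ≤ l3) (hl4 : 0 ≤ l4) (hl5 : 0 ≤ l5)
    (hl6 : 0 ≤ l6) (hl7 : 0 ≤ l7) (hb1 : 0 ≤ b1) (hb2 : 0 ≤ b2) (heps0 : 0 ≤ eps)
    (hgam : 0 ≤ gam) (hm : 0 ≤ m) (hmR : 0 ≤ mR) (hal0 : 0 ≤ al) (hal1 : al ≤ 1)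
    (heps : 0 < eps) (hl2pos : 0 < l2)
    (hl1 : l1 = 0) (hl3 : l3 = 0) (hl4 : l4 = 0) (hl5 : l5 = 0) (hl7 : l7 = 0)
    (htau : tau = al * gam * (l2 + mR * l6) / (eps * (eps + b2)))
    (htau1 : tau ≤ 1) :
    IsEquilibrium l1 l2 l3 l4 l5 l6 l7 b1 b2 eps gam m mR al 0 0 (gam * (1 - al) / eps) (gam * al / eps) ∧
    (∀ C' R' PC' PR' : ℝ, IsEquilibrium l1 l2 l3 l4 l5 l6 l7 b1 b2 eps gam m mR al C' R' PC' PR' →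
      0 ≤ C' → 0 ≤ R' → 0 ≤ PC' → 0 ≤ PR' →
      (C', R', PC', PR') = ((0 : ℝ), (0 : ℝ), gam * (1 - al) / eps, gam * al / eps)) := by
  subst hl1 hl3 hl4 hl5 hl7 htau
  have hk : 0 < l2 + mR * l6 := by positivity
  constructor
  · refine ⟨by ring, by ring, by field_simp; ring, by field_simp; ring⟩
  · intro C' R' PC' PR' ⟨e1, e2, e3, e4⟩ hC hR hPC hPR
    rw [div_le_one (by positivity)] at htau1
    have h2 : R' * ((l2 + mR * l6) * PR' - (eps + b2)) = 0 := by linear_combination e2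
    have hR0 : R' = 0 := by
      rcases mul_eq_zero.mp h2 with h | h
      · exact h
      · have hPReq : (l2 + mR * l6) * PR' = eps + b2 := by linarith
        have hRle : R' ≤ 0 := by nlinarith [mul_pos heps hk]
        linarith
    subst hR0
    have hC0 : C' = 0 := by
      have : (eps + b1) * C' = 0 := by linarith [e1]
      have h := mul_eq_zero.mp this
      rcases h with h | h
      · linarith
      · exact h
    subst hC0
    have hPC0 : PC' = gam * (1 - al) / eps := by
      field_simp
      linarith [e3]
    have hPR0 : PR' = gam * al / eps := by
      field_simp
      linarith [e4]
    simp [hPC0, hPR0]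
end

section
/- (Word of mouth, stability of the trivial equilibrium) Let ε > 0, λ₂ > 0 and λ₁ = λ₃ = λ₄ = λ₅ = λ₇ = 0. The Jacobian matrix of the customer-dynamics model at the equilibrium (0, 0, γ(1−α)/ε, γα/ε), namely J = [[−ε−β₁, λ₂(1−α)γ/ε, 0, 0], [0, −ε−β₂+(λ₂+m_Rλ₆)γα/ε, 0, 0], [β₁, −λ₂(1−α)γ/ε, −ε, 0], [0, β₂−(λ₂+m_Rλ₆)γα/ε, 0, −ε]] (in the coordinate order (C, R, P_C, P_R)), has eigenvalues −ε, −β₁−ε and γα(λ₂+m_Rλ₆)/ε − (β₂+ε); in particular, if τ < 1 every eigenvalue of J has negative real part, and if τ > 1 then J has a positive real eigenvalue. -/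
/-!
Ordering the coordinates as `(R, C, P_C, P_R)` makes the Jacobian lower triangular, so its
eigenvalues are its diagonal entries `-ε - β₁`, `-ε - β₂ + (λ₂ + m_R λ₆) γ α / ε` and `-ε`.
The middle one equals `(ε + β₂)(τ - 1)`, so its sign is that of `τ - 1`.
-/

open Real Filter Topology

namespace Matrix

theorem spectrum_eq_range_diag_of_blockTriangular {K n α : Type*} [Field K] [Fintype n]
    [DecidableEq n] [LinearOrder α] {M : Matrix n n K} {b : n → α}
    (hb : Function.Injective b) (hM : M.BlockTriangular b) :
    spectrum K M = Set.range M.diag := by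
  let : LinearOrder n := LinearOrder.lift' b hb
  have hupper : M.IsUpperTriangular := fun _ _ h => hM h
  ext μ
  simp only [mem_spectrum_iff_isRoot_charpoly, charpoly_of_isUpperTriangular M hupper,
    Polynomial.IsRoot.def, Polynomial.eval_prod, Polynomial.eval_sub, Polynomial.eval_X,
    Polynomial.eval_C, Finset.prod_eq_zero_iff, Finset.mem_univ, true_and, sub_eq_zero,
    Set.mem_range, diag_apply]
  exact exists_congr fun _ => eq_comm

theorem range_diag_fin_four {R : Type*} (M : Matrix (Fin 4) (Fin 4) R) :
    Set.range M.diag = {M 0 0, M 1 1, M 2 2, M 3 3} := by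
  ext x
  simp [Fin.exists_fin_succ, eq_comm]

end Matrix

theorem word_of_mouth_trivial_equilibrium_stability_general (l2 l6 b1 b2 eps gam mR al : ℝ) (tau : ℝ)
    (J : Matrix (Fin 4) (Fin 4) ℂ)
    (hb1 : 0 ≤ b1) (hb2 : 0 ≤ b2)
    (heps : 0 < eps)
    (htau : tau = al * gam * (l2 + mR * l6) / (eps * (eps + b2)))
    (hJ : J = !![((-eps - b1 : ℝ) : ℂ), ((l2 * ((1 - al) * gam / eps) : ℝ) : ℂ), 0, 0;
      0, ((-eps - b2 + (l2 + mR * l6) * (gam * al / eps) : ℝ) : ℂ), 0, 0;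
      ((b1 : ℝ) : ℂ), ((-(l2 * ((1 - al) * gam / eps)) : ℝ) : ℂ), ((-eps : ℝ) : ℂ), 0;
      0, ((b2 - (l2 + mR * l6) * (gam * al / eps) : ℝ) : ℂ), 0, ((-eps : ℝ) : ℂ)]) :
    spectrum ℂ J = {((-eps : ℝ) : ℂ), ((-b1 - eps : ℝ) : ℂ),
      ((gam * al * (l2 + mR * l6) / eps - (b2 + eps) : ℝ) : ℂ)} ∧
    (tau < 1 → ∀ μ ∈ spectrum ℂ J, μ.re < 0) ∧
    (tau > 1 → ∃ r : ℝ, 0 < r ∧ (r : ℂ) ∈ spectrum ℂ J) := by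
  have htriangular : J.BlockTriangular ![2, 3, 0, 1] := by
    subst hJ
    intro i j h
    fin_cases i <;> fin_cases j <;> simp_all
  have hspec : spectrum ℂ J = {((-eps : ℝ) : ℂ), ((-b1 - eps : ℝ) : ℂ),
      ((gam * al * (l2 + mR * l6) / eps - (b2 + eps) : ℝ) : ℂ)} := by
    have h00 : J 0 0 = ((-b1 - eps : ℝ) : ℂ) := by rw [hJ]; exact congrArg Complex.ofReal (by ring)
    have h11 : J 1 1 = ((gam * al * (l2 + mR * l6) / eps - (b2 + eps) : ℝ) : ℂ) := by
      rw [hJ]; exact congrArg Complex.ofReal (by ring)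
    have h22 : J 2 2 = ((-eps : ℝ) : ℂ) := by rw [hJ]; rfl
    have h33 : J 3 3 = ((-eps : ℝ) : ℂ) := by rw [hJ]; rfl
    rw [Matrix.spectrum_eq_range_diag_of_blockTriangular (by decide) htriangular,
      Matrix.range_diag_fin_four, h00, h11, h22, h33]
    ext μ
    simp only [Set.mem_insert_iff, Set.mem_singleton_iff]
    tauto
  have hgrowth : gam * al * (l2 + mR * l6) / eps - (b2 + eps) = (eps + b2) * (tau - 1) := by
    rw [htau]
    field_simp
    ring
  refine ⟨hspec, fun hlt μ hμ => ?_, fun hgt =>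
    ⟨gam * al * (l2 + mR * l6) / eps - (b2 + eps), ?_, by simp [hspec]⟩⟩
  · rw [hspec, hgrowth] at hμ
    rcases hμ with rfl | rfl | rfl <;> simp only [Complex.ofReal_re]
    · linarith
    · linarith
    · exact mul_neg_of_pos_of_neg (by linarith) (by linarith)
  · rw [hgrowth]
    exact mul_pos (by linarith) (by linarith)

theorem word_of_mouth_trivial_equilibrium_stability (l1 l2 l3 l4 l5 l6 l7 b1 b2 eps gam m mR al : ℝ) (tau : ℝ)
    (J : Matrix (Fin 4) (Fin 4) ℂ)
    (hl1 : 0 ≤ l1) (hl2 : 0 ≤ l2) (hl3 : 0 ≤ l3) (hl4 : 0 ≤ l4) (hl5 : 0 ≤ l5)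
    (hl6 : 0 ≤ l6) (hl7 : 0 ≤ l7) (hb1 : 0 ≤ b1) (hb2 : 0 ≤ b2) (heps0 : 0 ≤ eps)
    (hgam : 0 ≤ gam) (hm : 0 ≤ m) (hmR : 0 ≤ mR) (hal0 : 0 ≤ al) (hal1 : al ≤ 1)
    (heps : 0 < eps) (hl2pos : 0 < l2)
    (hl1 : l1 = 0) (hl3 : l3 = 0) (hl4 : l4 = 0) (hl5 : l5 = 0) (hl7 : l7 = 0)
    (htau : tau = al * gam * (l2 + mR * l6) / (eps * (eps + b2)))
    (hJ : J = !![((-eps - b1 : ℝ) : ℂ), ((l2 * ((1 - al) * gam / eps) : ℝ) : ℂ), 0, 0;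
      0, ((-eps - b2 + (l2 + mR * l6) * (gam * al / eps) : ℝ) : ℂ), 0, 0;
      ((b1 : ℝ) : ℂ), ((-(l2 * ((1 - al) * gam / eps)) : ℝ) : ℂ), ((-eps : ℝ) : ℂ), 0;
      0, ((b2 - (l2 + mR * l6) * (gam * al / eps) : ℝ) : ℂ), 0, ((-eps : ℝ) : ℂ)]) :
    spectrum ℂ J = {((-eps : ℝ) : ℂ), ((-b1 - eps : ℝ) : ℂ),
      ((gam * al * (l2 + mR * l6) / eps - (b2 + eps) : ℝ) : ℂ)} ∧
    (tau < 1 → ∀ μ ∈ spectrum ℂ J, μ.re < 0) ∧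
    (tau > 1 → ∃ r : ℝ, 0 < r ∧ (r : ℂ) ∈ spectrum ℂ J) :=
  word_of_mouth_trivial_equilibrium_stability_general l2 l6 b1 b2 eps gam mR al tau J hb1 hb2 heps
    htau hJ
end

section
/- (Word of mouth, τ > 1, stability of the second equilibrium) Let ε > 0, λ₂ > 0, λ₁ = λ₃ = λ₄ = λ₅ = λ₇ = 0, γ > 0, α > 0 and τ > 1. Let R₂* = αγ(1−1/τ)/ε, C₂* = α(1−α)λ₂γ²(1−1/τ)/(ε²(ε+β₁+λ₂R₂*)), P_{C,2}* = (1−α)γ(ε+β₁)/(ε(ε+β₁+λ₂R₂*)) and P_{R,2}* = (ε+β₂)/(λ₂+m_Rλ₆). Then the Jacobian matrix of the model at this equilibrium, J = [[−ε−β₁, λ₂P_{C,2}*, λ₂R₂*, 0], [0, 0, 0, (λ₂+m_Rλ₆)R₂*], [β₁, −λ₂P_{C,2}*, −ε−λ₂R₂*, 0], [0, −ε, 0, −ε−(λ₂+m_Rλ₆)R₂*]] (in the coordinate order (C, R, P_C, P_R)), has all of its complex eigenvalues with negative real part. -/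
open Real Filter Topology

/-!
In the coordinate order `(C, R, P_C, P_R)` the rows of `R` and `P_R` involve only the columns of
`R` and `P_R`, so the Jacobian is block triangular up to a permutation. The characteristic
polynomial is therefore the product of two quadratics, which split as `(μ + ε)(μ + k R₂*)` and
`(μ + ε)(μ + ε + β₁ + λ₂ R₂*)` with `k = λ₂ + m_R λ₆`. Since `τ > 1` makes `R₂* > 0`, all four
roots are negative reals.
-/

open Matrix Polynomial

/-- The Jacobian of the word-of-mouth model at an equilibrium with `λ₁ = λ₃ = λ₄ = λ₅ = λ₇ = 0`,
written with `p = λ₂ P_C*`, `q = λ₂ R*` and `r = (λ₂ + m_R λ₆) R*`. -/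
def wordOfMouthJacobian {A : Type*} [Ring A] (e b p q r : A) : Matrix (Fin 4) (Fin 4) A :=
  !![-e - b, p, q, 0;
    0, 0, 0, r;
    b, -p, -e - q, 0;
    0, -e, 0, -e - r]

theorem eval_charpoly_wordOfMouthJacobian {A : Type*} [CommRing A] (e b p q r μ : A) :
    (wordOfMouthJacobian e b p q r).charpoly.eval μ = (μ + e) ^ 2 * (μ + e + b + q) * (μ + r) := by
  rw [eval_charpoly]
  simp [wordOfMouthJacobian, Fin.sum_univ_succ, det_succ_row_zero, Fin.succAbove]
  ring

theorem Complex.re_neg_of_add_ofReal_eq_zero {z : ℂ} {x : ℝ} (hx : 0 < x) (h : z + x = 0) :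
    z.re < 0 := by
  rw [eq_neg_of_add_eq_zero_left h]
  simpa using hx

theorem re_neg_of_mem_spectrum_wordOfMouthJacobian {e b q r : ℝ} (p : ℂ) (he : 0 < e)
    (hb : 0 ≤ b) (hq : 0 ≤ q) (hr : 0 < r) :
    ∀ μ ∈ spectrum ℂ (wordOfMouthJacobian (e : ℂ) b p q r), μ.re < 0 := by
  intro μ hμ
  rw [mem_spectrum_iff_isRoot_charpoly, IsRoot.def, eval_charpoly_wordOfMouthJacobian] at hμ
  rcases mul_eq_zero.1 hμ with hμ | hμ
  · rcases mul_eq_zero.1 hμ with hμ | hμ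
    · exact Complex.re_neg_of_add_ofReal_eq_zero he (pow_eq_zero_iff two_ne_zero |>.1 hμ)
    · refine Complex.re_neg_of_add_ofReal_eq_zero (x := e + b + q) (by positivity) ?_
      push_cast
      linear_combination hμ
  · exact Complex.re_neg_of_add_ofReal_eq_zero hr hμ

theorem word_of_mouth_second_equilibrium_stability_general (l2 l6 b1 eps gam mR al : ℝ) (tau Rs PCs : ℝ)
    (J : Matrix (Fin 4) (Fin 4) ℂ)
    (hl6 : 0 ≤ l6) (hb1 : 0 ≤ b1) (hmR : 0 ≤ mR)
    (heps : 0 < eps) (hl2pos : 0 < l2)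
    (hgampos : 0 < gam) (halpos : 0 < al)
    (htau1 : 1 < tau)
    (hRs : Rs = al * gam * (1 - 1 / tau) / eps)
    (hJ : J = !![((-eps - b1 : ℝ) : ℂ), ((l2 * PCs : ℝ) : ℂ), ((l2 * Rs : ℝ) : ℂ), 0;
      0, 0, 0, (((l2 + mR * l6) * Rs : ℝ) : ℂ);
      ((b1 : ℝ) : ℂ), ((-(l2 * PCs) : ℝ) : ℂ), ((-eps - l2 * Rs : ℝ) : ℂ), 0;
      0, ((-eps : ℝ) : ℂ), 0, ((-eps - (l2 + mR * l6) * Rs : ℝ) : ℂ)]) :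
    ∀ μ ∈ spectrum ℂ J, μ.re < 0 := by
  have hRs_pos : 0 < Rs := by
    have : 1 / tau < 1 := (div_lt_one (one_pos.trans htau1)).2 htau1
    rw [hRs]
    exact div_pos (mul_pos (mul_pos halpos hgampos) (sub_pos.2 this)) heps
  have hJ' : J = wordOfMouthJacobian (eps : ℂ) b1 (l2 * PCs : ℝ) (l2 * Rs : ℝ)
      ((l2 + mR * l6) * Rs : ℝ) := by
    rw [hJ, wordOfMouthJacobian]
    push_cast
    rfl
  rw [hJ']
  exact re_neg_of_mem_spectrum_wordOfMouthJacobian _ heps hb1 (by positivity) (by positivity)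

theorem word_of_mouth_second_equilibrium_stability (l1 l2 l3 l4 l5 l6 l7 b1 b2 eps gam m mR al : ℝ) (tau Cs Rs PCs PRs : ℝ)
    (J : Matrix (Fin 4) (Fin 4) ℂ)
    (hl1 : 0 ≤ l1) (hl2 : 0 ≤ l2) (hl3 : 0 ≤ l3) (hl4 : 0 ≤ l4) (hl5 : 0 ≤ l5)
    (hl6 : 0 ≤ l6) (hl7 : 0 ≤ l7) (hb1 : 0 ≤ b1) (hb2 : 0 ≤ b2) (heps0 : 0 ≤ eps)
    (hgam : 0 ≤ gam) (hm : 0 ≤ m) (hmR : 0 ≤ mR) (hal0 : 0 ≤ al) (hal1 : al ≤ 1)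
    (heps : 0 < eps) (hl2pos : 0 < l2)
    (hl1 : l1 = 0) (hl3 : l3 = 0) (hl4 : l4 = 0) (hl5 : l5 = 0) (hl7 : l7 = 0)
    (hgampos : 0 < gam) (halpos : 0 < al)
    (htau : tau = al * gam * (l2 + mR * l6) / (eps * (eps + b2)))
    (htau1 : 1 < tau)
    (hRs : Rs = al * gam * (1 - 1 / tau) / eps)
    (hCs : Cs = al * (1 - al) * l2 * gam ^ 2 * (1 - 1 / tau)
      / (eps ^ 2 * (eps + b1 + l2 * Rs)))
    (hPCs : PCs = (1 - al) * gam * (eps + b1) / (eps * (eps + b1 + l2 * Rs)))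
    (hPRs : PRs = (eps + b2) / (l2 + mR * l6))
    (hJ : J = !![((-eps - b1 : ℝ) : ℂ), ((l2 * PCs : ℝ) : ℂ), ((l2 * Rs : ℝ) : ℂ), 0;
      0, 0, 0, (((l2 + mR * l6) * Rs : ℝ) : ℂ);
      ((b1 : ℝ) : ℂ), ((-(l2 * PCs) : ℝ) : ℂ), ((-eps - l2 * Rs : ℝ) : ℂ), 0;
      0, ((-eps : ℝ) : ℂ), 0, ((-eps - (l2 + mR * l6) * Rs : ℝ) : ℂ)]) :
    ∀ μ ∈ spectrum ℂ J, μ.re < 0 :=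
  word_of_mouth_second_equilibrium_stability_general l2 l6 b1 eps gam mR al tau Rs PCs J hl6 hb1 hmR
    heps hl2pos hgampos halpos htau1 hRs hJ
end

section
/- (No referral influence, equilibrium) Let ε > 0, λ₅ > 0 and λ₂ = λ₆ = 0. Then uv − λ₅λ₇ > 0 and the customer-dynamics model has a unique equilibrium (C*, R*, P_C*, P_R*), given by R* = [(λ₃+mλ₄)up + (λ₁+mλ₄)λ₅q] / (uv − λ₅λ₇), C* = [(λ₁+mλ₄)vq + (λ₃+mλ₄)λ₇p] / (uv − λ₅λ₇), P_R* = p − R* and P_C* = q − C*; moreover all four components are nonnegative. -/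
/-!
Without referral effects (`λ₂ = λ₆ = 0`) the model is linear. Adding the equations for `C` and
`P_C`, and those for `R` and `P_R`, gives a closed 2 × 2 system for the totals `C + P_C` and
`R + P_R`, with solution `(q, p)`; substituting `P_C = q - C`, `P_R = p - R` into the first two
equations leaves a 2 × 2 system for `(C, R)`, solved by Cramer's rule. Every 2 × 2 system that
occurs, including the one the equations for `P_C`, `P_R` form once `C`, `R` are known, has a
strictly column diagonally dominant Z-matrix: its determinant is positive and nonnegative
right-hand sides give nonnegative solutions.
-/

open Real Filter Topology

section LinearSystem

variable {a b c d e f x y : ℝ}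

theorem det_pos_of_lt_of_lt (hb : 0 ≤ b) (hc : 0 ≤ c) (hca : c < a) (hbd : b < d) :
    0 < a * d - c * b := by
  have := mul_lt_mul'' hca hbd hc hb
  linarith

theorem linear_system_iff_eq_div (hdet : a * d - c * b ≠ 0) :
    (a * x - b * y = e ∧ d * y - c * x = f) ↔
      x = (d * e + b * f) / (a * d - c * b) ∧ y = (a * f + c * e) / (a * d - c * b) := by
  simp only [eq_div_iff hdet]
  constructor
  · rintro ⟨h₁, h₂⟩
    exact ⟨by linear_combination d * h₁ + b * h₂, by linear_combination a * h₂ + c * h₁⟩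
  · rintro ⟨hx, hy⟩
    refine ⟨mul_right_cancel₀ hdet ?_, mul_right_cancel₀ hdet ?_⟩
    · linear_combination a * hx - b * hy
    · linear_combination d * hy - c * hx

theorem linear_system_nonneg (hb : 0 ≤ b) (hc : 0 ≤ c) (hca : c < a) (hbd : b < d)
    (he : 0 ≤ e) (hf : 0 ≤ f) (h₁ : a * x - b * y = e) (h₂ : d * y - c * x = f) :
    0 ≤ x ∧ 0 ≤ y := by
  have hdet := det_pos_of_lt_of_lt hb hc hca hbd
  have ha : 0 ≤ a := hc.trans hca.le
  have hd : 0 ≤ d := hb.trans hbd.le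
  obtain ⟨rfl, rfl⟩ := (linear_system_iff_eq_div hdet.ne').mp ⟨h₁, h₂⟩
  constructor <;> positivity

end LinearSystem

section NoReferral

variable {l1 l3 l4 l5 l7 b1 b2 eps gam m mR al C R PC PR : ℝ}

theorem isEquilibrium_linear_iff :
    IsEquilibrium l1 0 l3 l4 l5 0 l7 b1 b2 eps gam m mR al C R PC PR ↔
      ((eps + l5) * (C + PC) - l7 * (R + PR) = (1 - al) * gam ∧
        (eps + l7) * (R + PR) - l5 * (C + PC) = al * gam) ∧
      ((eps + b1 + l5 + l1 + m * l4) * C - l7 * R = (l1 + m * l4) * (C + PC) ∧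
        (eps + b2 + l7 + l3 + m * l4) * R - l5 * C = (l3 + m * l4) * (R + PR)) := by
  unfold IsEquilibrium
  constructor
  · rintro ⟨h₁, h₂, h₃, h₄⟩
    exact ⟨⟨by linear_combination -h₁ - h₃, by linear_combination -h₂ - h₄⟩,
      by linear_combination -h₁, by linear_combination -h₂⟩
  · rintro ⟨⟨hS, hT⟩, hC, hR⟩
    exact ⟨by linear_combination -hC, by linear_combination -hR,
      by linear_combination hC - hS, by linear_combination hR - hT⟩

theorem totals_system_iff (heps : 0 < eps) (hl5 : 0 ≤ l5) (hl7 : 0 ≤ l7) {S T : ℝ} :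
    ((eps + l5) * S - l7 * T = (1 - al) * gam ∧ (eps + l7) * T - l5 * S = al * gam) ↔
      S = gam * ((1 - al) * eps + l7) / (eps * (eps + l5 + l7)) ∧
        T = gam * (al * eps + l5) / (eps * (eps + l5 + l7)) := by
  rw [linear_system_iff_eq_div (det_pos_of_lt_of_lt hl7 hl5 (by linarith) (by linarith)).ne']
  constructor <;> rintro ⟨rfl, rfl⟩ <;> constructor <;> ring

theorem IsEquilibrium.nonneg (hl1 : 0 ≤ l1) (hl3 : 0 ≤ l3) (hl4 : 0 ≤ l4) (hl5 : 0 ≤ l5)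
    (hl7 : 0 ≤ l7) (hb1 : 0 ≤ b1) (hb2 : 0 ≤ b2) (hm : 0 ≤ m) (heps : 0 < eps)
    (hgam : 0 ≤ gam) (hal0 : 0 ≤ al) (hal1 : al ≤ 1)
    (h : IsEquilibrium l1 0 l3 l4 l5 0 l7 b1 b2 eps gam m mR al C R PC PR) :
    0 ≤ C ∧ 0 ≤ R ∧ 0 ≤ PC ∧ 0 ≤ PR := by
  obtain ⟨⟨hS, hT⟩, hC, hR⟩ := isEquilibrium_linear_iff.mp h
  obtain ⟨-, -, hPC, hPR⟩ := h
  have hA : 0 ≤ l1 + m * l4 := by positivity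
  have hB : 0 ≤ l3 + m * l4 := by positivity
  obtain ⟨hS0, hT0⟩ := linear_system_nonneg hl7 hl5 (by linarith) (by linarith)
    (mul_nonneg (sub_nonneg.2 hal1) hgam) (mul_nonneg hal0 hgam) hS hT
  obtain ⟨hC0, hR0⟩ := linear_system_nonneg hl7 hl5 (by linarith) (by linarith)
    (mul_nonneg hA hS0) (mul_nonneg hB hT0) hC hR
  obtain ⟨hPC0, hPR0⟩ := linear_system_nonneg (a := eps + l5 + l1 + m * l4)
    (d := eps + l7 + l3 + m * l4) (x := PC) (y := PR) hl7 hl5 (by linarith) (by linarith)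
    (by positivity : 0 ≤ (1 - al) * gam + b1 * C) (by positivity : 0 ≤ al * gam + b2 * R)
    (by linear_combination -hPC) (by linear_combination -hPR)
  exact ⟨hC0, hR0, hPC0, hPR0⟩

end NoReferral

theorem no_referral_influence_equilibrium (l1 l2 l3 l4 l5 l6 l7 b1 b2 eps gam m mR al : ℝ) (p q u v Cs Rs PCs PRs : ℝ)
    (hl1 : 0 ≤ l1) (hl2 : 0 ≤ l2) (hl3 : 0 ≤ l3) (hl4 : 0 ≤ l4) (hl5 : 0 ≤ l5)
    (hl6 : 0 ≤ l6) (hl7 : 0 ≤ l7) (hb1 : 0 ≤ b1) (hb2 : 0 ≤ b2)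
    (hgam : 0 ≤ gam) (hm : 0 ≤ m) (hal0 : 0 ≤ al) (hal1 : al ≤ 1)
    (heps : 0 < eps)
    (hl2 : l2 = 0) (hl6 : l6 = 0)
    (hp : p = gam * (al * eps + l5) / (eps * (eps + l5 + l7)))
    (hq : q = gam * ((1 - al) * eps + l7) / (eps * (eps + l5 + l7)))
    (hu : u = eps + b1 + l5 + l1 + m * l4) (hv : v = eps + b2 + l7 + l3 + m * l4)
    (hRs : Rs = ((l3 + m * l4) * u * p + (l1 + m * l4) * l5 * q) / (u * v - l5 * l7))
    (hCs : Cs = ((l1 + m * l4) * v * q + (l3 + m * l4) * l7 * p) / (u * v - l5 * l7))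
    (hPRs : PRs = p - Rs)
    (hPCs : PCs = q - Cs) :
    0 < u * v - l5 * l7 ∧
    (IsEquilibrium l1 l2 l3 l4 l5 l6 l7 b1 b2 eps gam m mR al Cs Rs PCs PRs ∧
      0 ≤ Cs ∧ 0 ≤ Rs ∧ 0 ≤ PCs ∧ 0 ≤ PRs) ∧
    (∀ C' R' PC' PR' : ℝ, IsEquilibrium l1 l2 l3 l4 l5 l6 l7 b1 b2 eps gam m mR al C' R' PC' PR' →
      (C', R', PC', PR') = (Cs, Rs, PCs, PRs)) := by
  subst hl2 hl6
  have hml4 := mul_nonneg hm hl4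
  have hdet : 0 < u * v - l5 * l7 :=
    det_pos_of_lt_of_lt hl7 hl5 (by linarith) (by linarith)
  have hCR_iff : ∀ C R, (u * C - l7 * R = (l1 + m * l4) * q ∧ v * R - l5 * C = (l3 + m * l4) * p)
      ↔ C = Cs ∧ R = Rs := by
    intro C R
    rw [linear_system_iff_eq_div hdet.ne', hCs, hRs]
    constructor <;> rintro ⟨rfl, rfl⟩ <;> constructor <;> ring
  have hequil_iff : ∀ C R PC PR, IsEquilibrium l1 0 l3 l4 l5 0 l7 b1 b2 eps gam m mR al C R PC PR ↔
      (C, R, PC, PR) = (Cs, Rs, PCs, PRs) := by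
    intro C R PC PR
    subst hu hv
    rw [isEquilibrium_linear_iff, totals_system_iff heps hl5 hl7, ← hp, ← hq, Prod.mk.injEq, Prod.mk.injEq, Prod.mk.injEq, hPCs, hPRs]
    constructor
    · rintro ⟨⟨hS, hT⟩, hCR⟩
      rw [hS, hT, hCR_iff] at hCR
      obtain ⟨rfl, rfl⟩ := hCR
      exact ⟨rfl, rfl, by linarith, by linarith⟩
    · rintro ⟨rfl, rfl, rfl, rfl⟩
      rw [add_sub_cancel, add_sub_cancel]
      exact ⟨⟨rfl, rfl⟩, (hCR_iff _ _).mpr ⟨rfl, rfl⟩⟩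
  have hequil := (hequil_iff Cs Rs PCs PRs).mpr rfl
  exact ⟨hdet, ⟨hequil, hequil.nonneg hl1 hl3 hl4 hl5 hl7 hb1 hb2 hm heps hgam hal0 hal1⟩,
    fun C R PC PR => (hequil_iff C R PC PR).mp⟩
end

section
/- (No referral influence, coefficient matrix is Hurwitz) Let ε > 0, λ₅ > 0 and λ₂ = λ₆ = 0. The coefficient matrix of the (affine) customer-dynamics model, J = [[−ε−β₁−λ₅, λ₇, λ₁+mλ₄, 0], [λ₅, −ε−β₂−λ₇, 0, λ₃+mλ₄], [β₁, 0, −ε−λ₅−λ₁−mλ₄, λ₇], [0, β₂, λ₅, −ε−λ₇−λ₃−mλ₄]] (in the coordinate order (C, R, P_C, P_R)), has −ε and −ε−λ₅−λ₇ among its eigenvalues, and every complex eigenvalue of J has negative real part. -/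
open Real Filter Topology

/-!
The coefficient matrix is a Metzler matrix (nonnegative off-diagonal entries) whose columns all
sum to `-ε`: transitions between the four compartments conserve customers, who only leave at
rate `ε`. Hence `(1, 1, 1, 1)` is a left eigenvector for `-ε`, and the column version of
Gershgorin's theorem puts every eigenvalue in a disc centred at `J k k` of radius
`∑ i ≠ k, J i k = -ε - J k k`, so to the left of `-ε`. The imbalance `λ₅ (C + P_C) - λ₇ (R + P_R)`
between the flows `C → R` and `R → C` is a left eigenvector for `-ε - λ₅ - λ₇`.
-/

namespace Matrix

variable {n : Type*} [Fintype n] [DecidableEq n]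

theorem mem_spectrum_of_vecMul_eq_smul {K : Type*} [Field K] {A : Matrix n n K} {v : n → K}
    {μ : K} (hv : v ≠ 0) (h : v ᵥ* A = μ • v) : μ ∈ spectrum K A := by
  rw [spectrum.mem_iff, isUnit_iff_isUnit_det, isUnit_iff_ne_zero, not_not,
    ← exists_vecMul_eq_zero_iff]
  refine ⟨v, hv, ?_⟩
  rw [Algebra.algebraMap_eq_smul_one, vecMul_sub, vecMul_smul, vecMul_one, h, sub_self]

theorem ofReal_mem_spectrum_map_of_vecMul_eq_smul {A : Matrix n n ℝ} {v : n → ℝ} {μ : ℝ}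
    (hv : v ≠ 0) (h : v ᵥ* A = μ • v) :
    (μ : ℂ) ∈ spectrum ℂ (A.map ((↑) : ℝ → ℂ)) := by
  refine mem_spectrum_of_vecMul_eq_smul (v := Complex.ofRealHom ∘ v) ?_ ?_
  · exact fun h0 ↦ hv (funext fun i ↦ by simpa using congrFun h0 i)
  · ext j
    exact (Complex.ofRealHom.map_vecMul A v j).symm.trans (by simp [h])

theorem re_le_of_mem_spectrum_of_sum_col_le {A : Matrix n n ℝ} {s : ℝ}
    (hA : ∀ i j, i ≠ j → 0 ≤ A i j) (hs : ∀ j, ∑ i, A i j ≤ s) {μ : ℂ}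
    (hμ : μ ∈ spectrum ℂ (A.map ((↑) : ℝ → ℂ))) : μ.re ≤ s := by
  by_contra! hlt
  refine spectrum.mem_iff.mp hμ ((isUnit_iff_isUnit_det _).mpr (isUnit_iff_ne_zero.mpr
    (det_ne_zero_of_sum_col_lt_diag fun k ↦ ?_)))
  have hoff : ∑ i ∈ Finset.univ.erase k, ‖(algebraMap ℂ _ μ - A.map ((↑) : ℝ → ℂ)) i k‖ =
      ∑ i ∈ Finset.univ.erase k, A i k := by
    refine Finset.sum_congr rfl fun i hi ↦ ?_
    have hik := Finset.ne_of_mem_erase hi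
    simp [algebraMap_eq_diagonal, diagonal_apply_ne _ hik, hA i k hik]
  have hdiag : ‖(algebraMap ℂ _ μ - A.map ((↑) : ℝ → ℂ)) k k‖ = ‖μ - A k k‖ := by
    simp [algebraMap_eq_diagonal]
  rw [hoff, hdiag]
  calc ∑ i ∈ Finset.univ.erase k, A i k
      = ∑ i, A i k - A k k := by rw [← Finset.add_sum_erase _ _ (Finset.mem_univ k)]; ring
    _ < μ.re - A k k := by linarith [hs k]
    _ = (μ - A k k).re := by simp
    _ ≤ ‖μ - A k k‖ := Complex.re_le_norm _

end Matrix

open Matrix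

/-- The coefficient matrix of the model with `λ₂ = λ₆ = 0`, in the coordinates `(C, R, P_C, P_R)`. -/
def affineCoeffMatrix (l1 l3 l4 l5 l7 b1 b2 eps m : ℝ) : Matrix (Fin 4) (Fin 4) ℝ :=
  !![-eps - b1 - l5, l7, l1 + m * l4, 0;
    l5, -eps - b2 - l7, 0, l3 + m * l4;
    b1, 0, -eps - l5 - l1 - m * l4, l7;
    0, b2, l5, -eps - l7 - l3 - m * l4]

section affineCoeffMatrix

variable (l1 l3 l4 l5 l7 b1 b2 eps m : ℝ)

theorem sum_affineCoeffMatrix_col (j : Fin 4) :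
    ∑ i, affineCoeffMatrix l1 l3 l4 l5 l7 b1 b2 eps m i j = -eps := by
  fin_cases j <;> simp [affineCoeffMatrix, Fin.sum_univ_four]; ring

theorem affineCoeffMatrix_nonneg_of_ne (hl1 : 0 ≤ l1) (hl3 : 0 ≤ l3) (hl4 : 0 ≤ l4)
    (hl5 : 0 ≤ l5) (hl7 : 0 ≤ l7) (hb1 : 0 ≤ b1) (hb2 : 0 ≤ b2) (hm : 0 ≤ m) :
    ∀ i j, i ≠ j → 0 ≤ affineCoeffMatrix l1 l3 l4 l5 l7 b1 b2 eps m i j := by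
  intro i j hij
  fin_cases i <;> fin_cases j <;> simp [affineCoeffMatrix] at hij ⊢ <;> positivity

theorem const_one_vecMul_affineCoeffMatrix :
    (fun _ ↦ 1) ᵥ* affineCoeffMatrix l1 l3 l4 l5 l7 b1 b2 eps m = -eps • fun _ ↦ 1 := by
  ext j
  simp [vecMul, dotProduct, sum_affineCoeffMatrix_col]

theorem vecMul_affineCoeffMatrix_switching :
    ![l5, -l7, l5, -l7] ᵥ* affineCoeffMatrix l1 l3 l4 l5 l7 b1 b2 eps m =
      (-eps - l5 - l7) • ![l5, -l7, l5, -l7] := by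
  ext j
  fin_cases j <;> simp [affineCoeffMatrix, vecMul, dotProduct, Fin.sum_univ_four] <;> ring

end affineCoeffMatrix

theorem no_referral_influence_hurwitz_general (l1 l3 l4 l5 l7 b1 b2 eps m : ℝ)
    (J : Matrix (Fin 4) (Fin 4) ℂ)
    (hl1 : 0 ≤ l1) (hl3 : 0 ≤ l3) (hl4 : 0 ≤ l4)
    (hl7 : 0 ≤ l7) (hb1 : 0 ≤ b1) (hb2 : 0 ≤ b2)
    (hm : 0 ≤ m)
    (heps : 0 < eps) (hl5pos : 0 < l5)
    (hJ : J = !![((-eps - b1 - l5 : ℝ) : ℂ), ((l7 : ℝ) : ℂ), ((l1 + m * l4 : ℝ) : ℂ), 0;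
      ((l5 : ℝ) : ℂ), ((-eps - b2 - l7 : ℝ) : ℂ), 0, ((l3 + m * l4 : ℝ) : ℂ);
      ((b1 : ℝ) : ℂ), 0, ((-eps - l5 - l1 - m * l4 : ℝ) : ℂ), ((l7 : ℝ) : ℂ);
      0, ((b2 : ℝ) : ℂ), ((l5 : ℝ) : ℂ), ((-eps - l7 - l3 - m * l4 : ℝ) : ℂ)]) :
    ((-eps : ℝ) : ℂ) ∈ spectrum ℂ J ∧
    ((-eps - l5 - l7 : ℝ) : ℂ) ∈ spectrum ℂ J ∧
    ∀ μ ∈ spectrum ℂ J, μ.re < 0 := by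
  set A := affineCoeffMatrix l1 l3 l4 l5 l7 b1 b2 eps m
  have hJA : J = A.map (↑) := by
    subst hJ
    ext i j
    fin_cases i <;> fin_cases j <;> simp [A, affineCoeffMatrix]
  subst hJA
  refine ⟨?_, ?_, fun μ hμ ↦ ?_⟩
  · exact ofReal_mem_spectrum_map_of_vecMul_eq_smul (fun h ↦ by simpa using congrFun h 0)
      (const_one_vecMul_affineCoeffMatrix ..)
  · exact ofReal_mem_spectrum_map_of_vecMul_eq_smul
      (fun h ↦ hl5pos.ne' (by simpa using congrFun h 0)) (vecMul_affineCoeffMatrix_switching ..)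
  · have hMetzler := affineCoeffMatrix_nonneg_of_ne l1 l3 l4 l5 l7 b1 b2 eps m
      hl1 hl3 hl4 hl5pos.le hl7 hb1 hb2 hm
    have hre := re_le_of_mem_spectrum_of_sum_col_le hMetzler
      (fun j ↦ (sum_affineCoeffMatrix_col ..).le) hμ
    linarith

theorem no_referral_influence_hurwitz (l1 l2 l3 l4 l5 l6 l7 b1 b2 eps gam m mR al : ℝ)
    (J : Matrix (Fin 4) (Fin 4) ℂ)
    (hl1 : 0 ≤ l1) (hl2 : 0 ≤ l2) (hl3 : 0 ≤ l3) (hl4 : 0 ≤ l4) (hl5 : 0 ≤ l5)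
    (hl6 : 0 ≤ l6) (hl7 : 0 ≤ l7) (hb1 : 0 ≤ b1) (hb2 : 0 ≤ b2) (heps0 : 0 ≤ eps)
    (hgam : 0 ≤ gam) (hm : 0 ≤ m) (hmR : 0 ≤ mR) (hal0 : 0 ≤ al) (hal1 : al ≤ 1)
    (heps : 0 < eps) (hl5pos : 0 < l5)
    (hl2 : l2 = 0) (hl6 : l6 = 0)
    (hJ : J = !![((-eps - b1 - l5 : ℝ) : ℂ), ((l7 : ℝ) : ℂ), ((l1 + m * l4 : ℝ) : ℂ), 0;
      ((l5 : ℝ) : ℂ), ((-eps - b2 - l7 : ℝ) : ℂ), 0, ((l3 + m * l4 : ℝ) : ℂ);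
      ((b1 : ℝ) : ℂ), 0, ((-eps - l5 - l1 - m * l4 : ℝ) : ℂ), ((l7 : ℝ) : ℂ);
      0, ((b2 : ℝ) : ℂ), ((l5 : ℝ) : ℂ), ((-eps - l7 - l3 - m * l4 : ℝ) : ℂ)]) :
    ((-eps : ℝ) : ℂ) ∈ spectrum ℂ J ∧
    ((-eps - l5 - l7 : ℝ) : ℂ) ∈ spectrum ℂ J ∧
    ∀ μ ∈ spectrum ℂ J, μ.re < 0 :=
  no_referral_influence_hurwitz_general l1 l3 l4 l5 l7 b1 b2 eps m J hl1 hl3 hl4 hl7 hb1 hb2 hm heps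
    hl5pos hJ
end

section
/- (No referral influence, global asymptotic stability) Let ε > 0, λ₅ > 0 and λ₂ = λ₆ = 0, and let (C*, R*, P_C*, P_R*) denote the unique equilibrium of the customer-dynamics model, given by R* = [(λ₃+mλ₄)up + (λ₁+mλ₄)λ₅q]/(uv − λ₅λ₇), C* = [(λ₁+mλ₄)vq + (λ₃+mλ₄)λ₇p]/(uv − λ₅λ₇), P_R* = p − R*, P_C* = q − C*. Then every solution (C(t), R(t), P_C(t), P_R(t)) of the model on [t₀, ∞) converges to (C*, R*, P_C*, P_R*) as t → +∞. -/
/-!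
With `λ₂ = λ₆ = 0` the model is linear. The totals `S = C + R + P_C + P_R` and `Y = R + P_R`
satisfy closed scalar equations `S' = γ - ε S` and `Y' = α γ + λ₅ S - (ε + λ₅ + λ₇) Y`, so
`S → p + q`, `Y → p`, and `C + P_C → q`. With these as convergent forcing terms, `(P_C, P_R)`
solves a planar linear system with matrix `[[-u, λ₇], [λ₅, -v]]`, which has negative trace,
positive determinant `u v - λ₅ λ₇` and real spectrum. Triangularising it turns the system into a
cascade of two scalar equations `x' = k x + h` with `k < 0` and `h` convergent, and each of these
converges by Grönwall's inequality. Finally `C = (C + P_C) - P_C` and `R = Y - P_R`.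
-/

open Real Filter Topology

theorem tendsto_gronwallBound_atTop {δ K ε : ℝ} (hK : K < 0) :
    Tendsto (gronwallBound δ K ε) atTop (𝓝 (-ε / K)) := by
  have hexp : Tendsto (fun x => exp (K * x)) atTop (𝓝 0) :=
    tendsto_exp_atBot.comp (tendsto_id.const_mul_atTop_of_neg hK)
  rw [gronwallBound_of_K_ne_0 hK.ne]
  convert (hexp.const_mul δ).add ((hexp.sub_const 1).const_mul (ε / K)) using 2
  ring

theorem eventually_lt_of_hasDerivAt_le_mul_add {f f' : ℝ → ℝ} {k ε T c : ℝ} (hk : k < 0)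
    (hf : ∀ t ≥ T, HasDerivAt f (f' t) t) (hle : ∀ t ≥ T, f' t ≤ k * f t + ε)
    (hc : -ε / k < c) : ∀ᶠ t in atTop, f t < c := by
  have hbound (t : ℝ) (ht : T ≤ t) : f t ≤ gronwallBound (f T) k ε (t - T) :=
    le_gronwallBound_of_liminf_deriv_right_le
      (fun s hs => (hf s hs.1).continuousAt.continuousWithinAt)
      (fun s hs _ hr => (hf s hs.1).hasDerivWithinAt.liminf_right_slope_le hr)
      le_rfl (fun s hs => hle s hs.1) t ⟨ht, le_rfl⟩
  have hlim := (tendsto_gronwallBound_atTop (δ := f T) (ε := ε) hk).comp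
    (tendsto_atTop_add_const_right _ (-T) tendsto_id)
  filter_upwards [hlim.eventually_lt_const hc, eventually_ge_atTop T] with t hlt ht
  exact (hbound t ht).trans_lt (by simpa [sub_eq_add_neg] using hlt)

theorem eventually_lt_of_hasDerivAt_eq_mul_add {x h : ℝ → ℝ} {k L xs t0 b : ℝ} (hk : k < 0)
    (hxs : k * xs + L = 0) (hx : ∀ t ≥ t0, HasDerivAt x (k * x t + h t) t)
    (hh : Tendsto h atTop (𝓝 L)) (hb : xs < b) : ∀ᶠ t in atTop, x t < b := by
  obtain ⟨ε, hLε, hεb⟩ : ∃ ε, L < ε ∧ ε < -k * b := exists_between (by nlinarith)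
  obtain ⟨T, hT⟩ := eventually_atTop.1 ((hh.eventually_lt_const hLε).and (eventually_ge_atTop t0))
  refine eventually_lt_of_hasDerivAt_le_mul_add hk (ε := ε) (fun t ht => hx t (hT t ht).2)
    (fun t ht => by linarith [(hT t ht).1]) ?_
  rw [div_lt_iff_of_neg hk]
  linarith

theorem tendsto_of_hasDerivAt_eq_mul_add {x h : ℝ → ℝ} {k L xs t0 : ℝ} (hk : k < 0)
    (hxs : k * xs + L = 0) (hx : ∀ t ≥ t0, HasDerivAt x (k * x t + h t) t)
    (hh : Tendsto h atTop (𝓝 L)) : Tendsto x atTop (𝓝 xs) := by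
  refine tendsto_order.2 ⟨fun a ha => ?_, fun b hb =>
    eventually_lt_of_hasDerivAt_eq_mul_add hk hxs hx hh hb⟩
  have hneg := eventually_lt_of_hasDerivAt_eq_mul_add (x := -x) (h := -h) (b := -a) hk
    (by linear_combination -hxs)
    (fun t ht => (hx t ht).neg.congr_deriv (by simp only [Pi.neg_apply]; ring)) hh.neg
    (neg_lt_neg ha)
  filter_upwards [hneg] with t ht
  simpa using ht

theorem tendsto_of_hasDerivAt_linear₂ {x y f g : ℝ → ℝ} {a b c d F G xs ys t0 : ℝ}
    (htr : a + d < 0) (hdet : b * c < a * d) (hdisc : 0 ≤ (a - d) ^ 2 + 4 * b * c) (hc : c ≠ 0)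
    (hx : ∀ t ≥ t0, HasDerivAt x (a * x t + b * y t + f t) t)
    (hy : ∀ t ≥ t0, HasDerivAt y (c * x t + d * y t + g t) t)
    (hf : Tendsto f atTop (𝓝 F)) (hg : Tendsto g atTop (𝓝 G))
    (hxs : a * xs + b * ys + F = 0) (hys : c * xs + d * ys + G = 0) :
    Tendsto x atTop (𝓝 xs) ∧ Tendsto y atTop (𝓝 ys) := by
  -- `(c, μ - a)` is a left eigenvector for the eigenvalue `μ`, so in the coordinates
  -- `(c x + (μ - a) y, y)` the system is triangular with diagonal `μ, a + d - μ`.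
  obtain ⟨μ, hμ, hμneg, hνneg⟩ : ∃ μ, (μ - a) * (μ - d) = b * c ∧ μ < 0 ∧ a + d - μ < 0 := by
    have hsq := Real.sq_sqrt hdisc
    have hsqrt_nonneg := Real.sqrt_nonneg ((a - d) ^ 2 + 4 * b * c)
    refine ⟨(a + d + √((a - d) ^ 2 + 4 * b * c)) / 2, by linear_combination hsq / 4,
      by nlinarith, by linarith⟩
  have hs : Tendsto (fun t => c * x t + (μ - a) * y t) atTop (𝓝 (c * xs + (μ - a) * ys)) :=
    tendsto_of_hasDerivAt_eq_mul_add hμneg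
      (by linear_combination c * hxs + (μ - a) * hys + ys * hμ)
      (fun t ht => (((hx t ht).const_mul c).add ((hy t ht).const_mul (μ - a))).congr_deriv
        (by linear_combination (-y t) * hμ))
      ((hf.const_mul c).add (hg.const_mul (μ - a)))
  have hy' : Tendsto y atTop (𝓝 ys) :=
    tendsto_of_hasDerivAt_eq_mul_add hνneg (by linear_combination hys)
      (fun t ht => (hy t ht).congr_deriv (by ring)) (hs.add hg)
  refine ⟨?_, hy'⟩
  simpa only [add_sub_cancel_right, mul_div_cancel_left₀ _ hc] using
    (hs.sub (hy'.const_mul (μ - a))).div_const c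

section CustomerDynamics

variable {l1 l2 l3 l4 l5 l6 l7 b1 b2 eps gam m mR al t0 : ℝ} {C R PC PR : ℝ → ℝ}

theorem IsSolution.hasDerivAt_total_s18
    (hsol : IsSolution l1 l2 l3 l4 l5 l6 l7 b1 b2 eps gam m mR al t0 C R PC PR) :
    ∀ t ≥ t0, HasDerivAt (fun s => C s + R s + PC s + PR s)
      (-eps * (C t + R t + PC t + PR t) + gam) t := by
  intro t ht
  obtain ⟨hC, hR, hPC, hPR⟩ := hsol t ht
  exact (((hC.add hR).add hPC).add hPR).congr_deriv (by ring)

theorem IsSolution.hasDerivAt_R_add_PR_s18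
    (hsol : IsSolution l1 l2 l3 l4 l5 l6 l7 b1 b2 eps gam m mR al t0 C R PC PR) :
    ∀ t ≥ t0, HasDerivAt (fun s => R s + PR s)
      (-(eps + l5 + l7) * (R t + PR t) + (al * gam + l5 * (C t + R t + PC t + PR t))) t := by
  intro t ht
  obtain ⟨-, hR, -, hPR⟩ := hsol t ht
  exact (hR.add hPR).congr_deriv (by ring)

theorem IsSolution.hasDerivAt_PC (hl2 : l2 = 0)
    (hsol : IsSolution l1 l2 l3 l4 l5 l6 l7 b1 b2 eps gam m mR al t0 C R PC PR) :
    ∀ t ≥ t0, HasDerivAt PC (-(eps + b1 + l5 + l1 + m * l4) * PC t + l7 * PR t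
      + ((1 - al) * gam + b1 * (C t + PC t))) t := fun t ht =>
  (hsol t ht).2.2.1.congr_deriv (by subst hl2; ring)

theorem IsSolution.hasDerivAt_PR (hl2 : l2 = 0) (hl6 : l6 = 0)
    (hsol : IsSolution l1 l2 l3 l4 l5 l6 l7 b1 b2 eps gam m mR al t0 C R PC PR) :
    ∀ t ≥ t0, HasDerivAt PR (l5 * PC t + -(eps + b2 + l7 + l3 + m * l4) * PR t
      + (al * gam + b2 * (R t + PR t))) t := fun t ht =>
  (hsol t ht).2.2.2.congr_deriv (by subst hl2 hl6; ring)

end CustomerDynamics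

theorem no_referral_influence_global_stability (l1 l2 l3 l4 l5 l6 l7 b1 b2 eps gam m mR al : ℝ) (p q u v Cs Rs PCs PRs t0 : ℝ)
    (C R PC PR : ℝ → ℝ)
    (hl1 : 0 ≤ l1) (hl2 : 0 ≤ l2) (hl3 : 0 ≤ l3) (hl4 : 0 ≤ l4) (hl5 : 0 ≤ l5)
    (hl6 : 0 ≤ l6) (hl7 : 0 ≤ l7) (hb1 : 0 ≤ b1) (hb2 : 0 ≤ b2) (heps0 : 0 ≤ eps)
    (hgam : 0 ≤ gam) (hm : 0 ≤ m) (hmR : 0 ≤ mR) (hal0 : 0 ≤ al) (hal1 : al ≤ 1)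
    (heps : 0 < eps) (hl5pos : 0 < l5)
    (hl2 : l2 = 0) (hl6 : l6 = 0)
    (hp : p = gam * (al * eps + l5) / (eps * (eps + l5 + l7)))
    (hq : q = gam * ((1 - al) * eps + l7) / (eps * (eps + l5 + l7)))
    (hu : u = eps + b1 + l5 + l1 + m * l4) (hv : v = eps + b2 + l7 + l3 + m * l4)
    (hRs : Rs = ((l3 + m * l4) * u * p + (l1 + m * l4) * l5 * q) / (u * v - l5 * l7))
    (hCs : Cs = ((l1 + m * l4) * v * q + (l3 + m * l4) * l7 * p) / (u * v - l5 * l7))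
    (hPRs : PRs = p - Rs)
    (hPCs : PCs = q - Cs)
    (hsol : IsSolution l1 l2 l3 l4 l5 l6 l7 b1 b2 eps gam m mR al t0 C R PC PR) :
    Tendsto C atTop (𝓝 Cs) ∧ Tendsto R atTop (𝓝 Rs) ∧
    Tendsto PC atTop (𝓝 PCs) ∧ Tendsto PR atTop (𝓝 PRs) := by
  have hD : eps * (eps + l5 + l7) ≠ 0 := by positivity
  have hml4 : 0 ≤ m * l4 := mul_nonneg hm hl4
  have huv : l5 * l7 < u * v := by
    rw [hu, hv]
    nlinarith [mul_le_mul (by linarith : l5 ≤ eps + b1 + l5 + l1 + m * l4)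
      (by linarith : l7 ≤ eps + b2 + l7 + l3 + m * l4) hl7 (by linarith)]
  have hinflow : eps * (p + q) = gam ∧ al * gam = (eps + l7) * p - l5 * q := by
    rw [hp, hq]
    constructor <;> field_simp <;> ring
  have hCR : u * Cs - l7 * Rs = (l1 + m * l4) * q ∧ v * Rs - l5 * Cs = (l3 + m * l4) * p := by
    have hΔ : u * v - l5 * l7 ≠ 0 := (sub_pos.2 huv).ne'
    rw [hCs, hRs]
    constructor <;> rw [mul_div_assoc', mul_div_assoc', div_sub_div_same, div_eq_iff hΔ] <;> ring
  have hS : Tendsto (fun t => C t + R t + PC t + PR t) atTop (𝓝 (p + q)) :=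
    tendsto_of_hasDerivAt_eq_mul_add (neg_neg_of_pos heps) (by linear_combination -hinflow.1)
      hsol.hasDerivAt_total_s18 tendsto_const_nhds
  have hY : Tendsto (fun t => R t + PR t) atTop (𝓝 p) :=
    tendsto_of_hasDerivAt_eq_mul_add (by linarith) (by linear_combination hinflow.2)
      hsol.hasDerivAt_R_add_PR_s18 (tendsto_const_nhds.add (hS.const_mul l5))
  have hX : Tendsto (fun t => C t + PC t) atTop (𝓝 q) := by
    rw [← add_sub_cancel_left p q]
    exact (hS.sub hY).congr fun t => by ring
  obtain ⟨hPC, hPR⟩ := tendsto_of_hasDerivAt_linear₂ (xs := PCs) (ys := PRs)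
    (by linarith) (by rw [neg_mul_neg, ← hu, ← hv, mul_comm l7]; exact huv) (by positivity)
    hl5pos.ne' (hsol.hasDerivAt_PC hl2) (hsol.hasDerivAt_PR hl2 hl6)
    (tendsto_const_nhds.add (hX.const_mul b1)) (tendsto_const_nhds.add (hY.const_mul b2))
    (by rw [hPCs, hPRs]; linear_combination -hinflow.1 - hinflow.2 + hCR.1 - Cs * hu)
    (by rw [hPCs, hPRs]; linear_combination hinflow.2 + hCR.2 - Rs * hv)
  refine ⟨?_, ?_, hPC, hPR⟩
  · simpa [hPCs] using hX.sub hPC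
  · simpa [hPRs] using hY.sub hPR
end
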